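/- arXiv:2306.10549 — 7 statements merged into one kernel-verified Lean document; each statement's English description precedes it below -/
import Mathlib

section
/- Let n ≥ 2 and let Γ ⊆ Γ¹ be a nonempty open symmetric convex subset of ℝⁿ. Suppose 𝔣 ∈ C(Γ̄) ∩ C^∞(Γ) vanishes on the boundary ∂Γ and satisfies ∂𝔣/∂λᵢ(λ) > 0 for every 1 ≤ i ≤ n and every λ ∈ Γ. Then 𝔣(λ) > 0 for every λ ∈ Γ, and moreover λ + μ ∈ Γ for every λ ∈ Γ and every μ ∈ Γⁿ (i.e. Γ + Γⁿ ⊆ Γ). -/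
open Set

/-- Exit point on the frontier along a ray, given the set of admissible times is bounded. -/
lemma exit_frontier {n : ℕ} {Γ : Set (Fin n → ℝ)}
    (hΓopen : IsOpen Γ) (hΓconv : Convex ℝ Γ)
    {lam v : Fin n → ℝ} (hlam : lam ∈ Γ)
    (hbdd : BddAbove {t : ℝ | 0 ≤ t ∧ lam + t • v ∈ Γ}) :
    ∃ T : ℝ, 0 < T ∧ (∀ t ∈ Set.Ico (0:ℝ) T, lam + t • v ∈ Γ) ∧
      lam + T • v ∈ frontier Γ := by
  set A : Set ℝ := {t : ℝ | 0 ≤ t ∧ lam + t • v ∈ Γ} with hA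
  have h0A : (0:ℝ) ∈ A := ⟨le_refl 0, by simpa using hlam⟩
  have hAne : A.Nonempty := ⟨0, h0A⟩
  set T := sSup A with hT
  -- star property
  have hstar : ∀ s ∈ A, ∀ t, 0 ≤ t → t ≤ s → lam + t • v ∈ Γ := by
    intro s hs t ht hts
    rcases eq_or_lt_of_le (ht.trans hts) with h | hspos
    · have : t = 0 := le_antisymm (hts.trans h.symm.le) ht
      simpa [this] using hlam
    · have h1 : (0:ℝ) ≤ 1 - t / s := by
        have : t / s ≤ 1 := (div_le_one hspos).2 hts
        linarith
      have h2 : (0:ℝ) ≤ t / s := div_nonneg ht hspos.le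
      have key := hΓconv hlam hs.2 h1 h2 (by ring)
      have : (1 - t / s) • lam + (t / s) • (lam + s • v) = lam + t • v := by
        have hs0 : s ≠ 0 := hspos.ne'
        ext j
        simp only [Pi.add_apply, Pi.smul_apply, smul_eq_mul]
        field_simp
        ring
      rwa [this] at key
  -- continuity of the curve
  have hccont : Continuous (fun t : ℝ => lam + t • v) := by continuity
  -- T > 0
  have hTpos : 0 < T := by
    have h0 : (fun t : ℝ => lam + t • v) 0 = lam := by simp
    have : ∀ᶠ t in nhds (0:ℝ), lam + t • v ∈ Γ := by
      have := hccont.continuousAt (x := (0:ℝ))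
      have h := this.preimage_mem_nhds (hΓopen.mem_nhds (by simpa [h0] using hlam))
      exact h
    rcases Metric.eventually_nhds_iff.1 this with ⟨ε, hε, hball⟩
    have hmem : ε/2 ∈ A := by
      refine ⟨by linarith, hball ?_⟩
      rw [Real.dist_eq, sub_zero, abs_of_nonneg (by linarith : (0:ℝ) ≤ ε/2)]
      linarith
    have := le_csSup hbdd hmem
    linarith
  have hseg : ∀ t ∈ Set.Ico (0:ℝ) T, lam + t • v ∈ Γ := by
    intro t ht
    obtain ⟨s, hsA, hts⟩ := exists_lt_of_lt_csSup hAne ht.2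
    exact hstar s hsA t ht.1 hts.le
  -- closure membership
  have hclos : lam + T • v ∈ closure Γ := by
    have htend : Filter.Tendsto (fun t : ℝ => lam + t • v) (nhdsWithin T (Set.Iio T))
        (nhds (lam + T • v)) :=
      (hccont.tendsto T).mono_left nhdsWithin_le_nhds
    refine mem_closure_of_tendsto htend ?_
    filter_upwards [Ioo_mem_nhdsLT_of_mem (Set.mem_Ioc.2 ⟨hTpos, le_refl T⟩)] with t ht
    exact hseg t ⟨ht.1.le, ht.2⟩
  -- not in Γ
  have hnot : lam + T • v ∉ Γ := by
    intro hmem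
    have : ∀ᶠ t in nhds T, lam + t • v ∈ Γ := by
      have := hccont.continuousAt (x := T)
      exact this.preimage_mem_nhds (hΓopen.mem_nhds hmem)
    rcases Metric.eventually_nhds_iff.1 this with ⟨ε, hε, hball⟩
    have hmem2 : T + ε/2 ∈ A := by
      refine ⟨by linarith, hball ?_⟩
      rw [Real.dist_eq, add_sub_cancel_left, abs_of_nonneg (by linarith : (0:ℝ) ≤ ε/2)]
      linarith
    have := le_csSup hbdd hmem2
    linarith
  exact ⟨T, hTpos, hseg, by
    rw [hΓopen.frontier_eq]; exact ⟨hclos, hnot⟩⟩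

/-- If the directional derivative along `v` is negative on `Γ` and the ray from `lam`
along `v` exits `Γ` at a frontier point where `f` vanishes, then `f lam > 0`. -/
lemma pos_of_exit {n : ℕ} {Γ : Set (Fin n → ℝ)} {f : (Fin n → ℝ) → ℝ}
    (hf_cont : ContinuousOn f (closure Γ))
    (hf_diff : ∀ x ∈ Γ, DifferentiableAt ℝ f x)
    (hf_bdry : ∀ x ∈ frontier Γ, f x = 0)
    {lam v : Fin n → ℝ} {T : ℝ} (hT : 0 < T)
    (hseg : ∀ t ∈ Set.Ico (0:ℝ) T, lam + t • v ∈ Γ)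
    (hfr : lam + T • v ∈ frontier Γ)
    (hder : ∀ x ∈ Γ, fderiv ℝ f x v < 0) :
    0 < f lam := by
  set c : ℝ → (Fin n → ℝ) := fun t => lam + t • v with hc
  have hccont : Continuous c := by continuity
  have hmap : Set.MapsTo c (Set.Icc 0 T) (closure Γ) := by
    intro t ht
    rcases eq_or_lt_of_le ht.2 with h | h
    · rw [show c t = lam + T • v by rw [hc]; simp [h]]
      exact hfr.1
    · exact subset_closure (hseg t ⟨ht.1, h⟩)
  have hg : ContinuousOn (f ∘ c) (Set.Icc 0 T) :=
    hf_cont.comp hccont.continuousOn hmap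
  have hderiv : ∀ t ∈ Set.Ioo (0:ℝ) T, HasDerivAt (f ∘ c) (fderiv ℝ f (c t) v) t := by
    intro t ht
    have hmem : c t ∈ Γ := hseg t ⟨ht.1.le, ht.2⟩
    have hcd : HasDerivAt c v t := by
      have h1 : HasDerivAt (fun y : ℝ => y • v) ((1:ℝ) • v) t :=
        (hasDerivAt_id t).smul_const v
      simpa [hc] using h1.const_add lam
    exact ((hf_diff _ hmem).hasFDerivAt).comp_hasDerivAt t hcd
  have hanti : StrictAntiOn (f ∘ c) (Set.Icc 0 T) := by
    refine strictAntiOn_of_deriv_neg (convex_Icc 0 T) hg ?_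
    intro t ht
    rw [interior_Icc] at ht
    rw [(hderiv t ht).deriv]
    exact hder _ (hseg t ⟨ht.1.le, ht.2⟩)
  have h := hanti (Set.left_mem_Icc.2 hT.le) (Set.right_mem_Icc.2 hT.le) hT
  have hcT : (f ∘ c) T = 0 := by
    have : c T = lam + T • v := rfl
    simp only [Function.comp_apply, this]
    exact hf_bdry _ hfr
  have hc0 : (f ∘ c) 0 = f lam := by simp [hc]
  rw [hcT, hc0] at h
  exact h

/-- Let `n ≥ 2` and let `Γ ⊆ Γ¹` be a nonempty open symmetric convex
subset of `ℝⁿ`.  Suppose `𝔣 ∈ C(Γ̄) ∩ C^∞(Γ)` vanishes on `∂Γ` and has strictly positive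
first partial derivatives on `Γ`.  Then `𝔣 > 0` on `Γ` and `Γ + Γⁿ ⊆ Γ`. -/
theorem positivity_and_cone_property
    (n : ℕ) (hn : 2 ≤ n)
    (Γ : Set (Fin n → ℝ)) (f : (Fin n → ℝ) → ℝ)
    (hΓne : Γ.Nonempty) (hΓopen : IsOpen Γ) (hΓconv : Convex ℝ Γ)
    (hΓsymm : ∀ σ : Equiv.Perm (Fin n), ∀ x ∈ Γ, (x ∘ σ) ∈ Γ)
    (hΓsub : Γ ⊆ {x : Fin n → ℝ | 0 < ∑ i, x i})
    (hf_cont : ContinuousOn f (closure Γ))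
    (hf_smooth : ContDiffOn ℝ (⊤ : ℕ∞) f Γ)
    (hf_bdry : ∀ x ∈ frontier Γ, f x = 0)
    (hf_ell : ∀ x ∈ Γ, ∀ i : Fin n, 0 < fderiv ℝ f x (Pi.single i 1)) :
    ∀ lam ∈ Γ, 0 < f lam ∧
      ∀ mu : Fin n → ℝ, (∀ i, 0 < mu i) → lam + mu ∈ Γ := by
  have hnpos : 0 < n := by omega
  haveI : Nonempty (Fin n) := ⟨⟨0, hnpos⟩⟩
  have hf_diff : ∀ x ∈ Γ, DifferentiableAt ℝ f x := by
    intro x hx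
    exact (hf_smooth.contDiffAt (hΓopen.mem_nhds hx)).differentiableAt (by simp)
  -- directional derivative as a sum
  have hdir : ∀ x ∈ Γ, ∀ w : Fin n → ℝ, fderiv ℝ f x w = ∑ i, w i * fderiv ℝ f x (Pi.single i 1) := by
    intro x hx w
    have hw : w = ∑ i, w i • (Pi.single i 1 : Fin n → ℝ) := by
      ext j
      simp [Pi.single_apply, Finset.sum_ite_eq]
    conv_lhs => rw [hw]
    rw [map_sum]
    congr 1
    ext i
    rw [map_smul]
    rfl
  intro lam hlam
  -- Part 1: positivity
  have hpos : 0 < f lam := by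
    set v : Fin n → ℝ := fun _ => (-1:ℝ) with hv
    have hder : ∀ x ∈ Γ, fderiv ℝ f x v < 0 := by
      intro x hx
      rw [hdir x hx v]
      have : ∀ i : Fin n, (-1:ℝ) * fderiv ℝ f x (Pi.single i 1) < 0 := by
        intro i
        have := hf_ell x hx i
        nlinarith
      calc ∑ i, v i * fderiv ℝ f x (Pi.single i 1)
          = ∑ i, (-1:ℝ) * fderiv ℝ f x (Pi.single i 1) := rfl
        _ < 0 := Finset.sum_neg (fun i _ => this i) Finset.univ_nonempty
    have hbdd : BddAbove {t : ℝ | 0 ≤ t ∧ lam + t • v ∈ Γ} := by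
      refine ⟨(∑ i, lam i) / n, ?_⟩
      intro t ht
      have hsum := hΓsub ht.2
      simp only [Set.mem_setOf_eq] at hsum
      have hexp : ∑ i, (lam + t • v) i = (∑ i, lam i) - n * t := by
        simp [hv, Finset.sum_add_distrib, mul_comm]
        ring
      rw [hexp] at hsum
      rw [le_div_iff₀ (by exact_mod_cast hnpos)]
      nlinarith
    obtain ⟨T, hTpos, hseg, hfr⟩ := exit_frontier hΓopen hΓconv hlam hbdd
    exact pos_of_exit hf_cont hf_diff hf_bdry hTpos hseg hfr hder
  refine ⟨hpos, ?_⟩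
  -- Part 2: cone property
  intro mu hmu
  by_contra hc
  -- apply the exit lemma along mu, with -f
  have hbdd : BddAbove {t : ℝ | 0 ≤ t ∧ lam + t • mu ∈ Γ} := by
    refine ⟨1, ?_⟩
    intro t ht
    by_contra hgt
    push_neg at hgt
    -- then lam + mu is a convex combination of lam and lam + t • mu
    have htpos : (0:ℝ) < t := by linarith
    have h1 : (0:ℝ) ≤ 1 - 1 / t := by
      have : 1 / t ≤ 1 := by
        rw [div_le_one htpos]; linarith
      linarith
    have h2 : (0:ℝ) ≤ 1 / t := by positivity
    have key := hΓconv hlam ht.2 h1 h2 (by ring)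
    have heq : (1 - 1 / t) • lam + (1 / t) • (lam + t • mu) = lam + mu := by
      ext j
      simp only [Pi.add_apply, Pi.smul_apply, smul_eq_mul]
      field_simp
      ring
    rw [heq] at key
    exact hc key
  obtain ⟨T, hTpos, hseg, hfr⟩ := exit_frontier hΓopen hΓconv hlam hbdd
  have hder : ∀ x ∈ Γ, fderiv ℝ (fun y => -f y) x mu < 0 := by
    intro x hx
    rw [fderiv_fun_neg]
    simp only [ContinuousLinearMap.neg_apply, neg_neg, Left.neg_neg_iff]
    rw [hdir x hx mu]
    refine Finset.sum_pos (fun i _ => mul_pos (hmu i) (hf_ell x hx i)) Finset.univ_nonempty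
  have hcont' : ContinuousOn (fun y => -f y) (closure Γ) := hf_cont.neg
  have hdiff' : ∀ x ∈ Γ, DifferentiableAt ℝ (fun y => -f y) x := fun x hx => (hf_diff x hx).neg
  have hbdry' : ∀ x ∈ frontier Γ, (fun y => -f y) x = 0 := by
    intro x hx; simp [hf_bdry x hx]
  have := pos_of_exit hcont' hdiff' hbdry' hTpos hseg hfr hder
  linarith
end

section
/- Let n ≥ 2, let Γ ⊆ Γ¹ be a nonempty open symmetric convex subset of ℝⁿ, and let 𝔣 satisfy the structural conditions (1)–(5). Then for every 0 < s < t such that s𝟏 ∈ Γ and t𝟏 ∈ Γ, and every 1 ≤ i ≤ n, one has ∂𝔣/∂λᵢ(s𝟏) ≥ ∂𝔣/∂λᵢ(t𝟏) ≥ c^{1/n}. In particular, if 𝟏 ∈ Γ then the function t ↦ ∂𝔣/∂λᵢ(t𝟏) is nonincreasing on [1,∞) and converges to a positive limit as t → +∞. -/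
/-- Under the structural conditions (1)–(5): for `0 < s < t` with
`s𝟏, t𝟏 ∈ Γ` one has `∂𝔣/∂λᵢ(s𝟏) ≥ ∂𝔣/∂λᵢ(t𝟏) ≥ c^(1/n)` for every `i`; in particular,
if `𝟏 ∈ Γ` then `t ↦ ∂𝔣/∂λᵢ(t𝟏)` is nonincreasing on `[1, ∞)` and converges to a
positive limit as `t → +∞`. -/
theorem diagonal_derivative_monotone_and_limit
    (n : ℕ) (hn : 2 ≤ n)
    (Γ : Set (Fin n → ℝ)) (f : (Fin n → ℝ) → ℝ) (c : ℝ)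
    (hΓne : Γ.Nonempty) (hΓopen : IsOpen Γ) (hΓconv : Convex ℝ Γ)
    (hΓsymm : ∀ σ : Equiv.Perm (Fin n), ∀ x ∈ Γ, (x ∘ σ) ∈ Γ)
    (hΓsub : Γ ⊆ {x : Fin n → ℝ | 0 < ∑ i, x i})
    (hf_cont : ContinuousOn f (closure Γ))
    (hf_smooth : ContDiffOn ℝ (⊤ : ℕ∞) f Γ)
    (hf_bdry : ∀ x ∈ frontier Γ, f x = 0)
    (hf_symm : ∀ σ : Equiv.Perm (Fin n), ∀ x ∈ Γ, f (x ∘ σ) = f x)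
    (hf_ell : ∀ x ∈ Γ, ∀ i : Fin n, 0 < fderiv ℝ f x (Pi.single i 1))
    (hc : 0 < c)
    (hf_prod : ∀ x ∈ Γ, c ≤ ∏ i : Fin n, fderiv ℝ f x (Pi.single i 1))
    (hf_conc : ConcaveOn ℝ Γ f) :
    (∀ s t : ℝ, 0 < s → s < t →
      (fun _ : Fin n => s) ∈ Γ → (fun _ : Fin n => t) ∈ Γ →
      ∀ i : Fin n,
        fderiv ℝ f (fun _ => t) (Pi.single i 1) ≤
            fderiv ℝ f (fun _ => s) (Pi.single i 1) ∧
          c ^ ((1 : ℝ) / n) ≤ fderiv ℝ f (fun _ => t) (Pi.single i 1)) ∧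
    ((fun _ : Fin n => (1 : ℝ)) ∈ Γ →
      ∀ i : Fin n,
        AntitoneOn (fun t : ℝ => fderiv ℝ f (fun _ => t) (Pi.single i 1)) (Set.Ici 1) ∧
        ∃ l : ℝ, 0 < l ∧
          Filter.Tendsto (fun t : ℝ => fderiv ℝ f (fun _ => t) (Pi.single i 1))
            Filter.atTop (nhds l)) := by
  classical
  have hn0 : 0 < n := by omega
  haveI : Nonempty (Fin n) := Fin.pos_iff_nonempty.mp hn0
  have hnR : (0:ℝ) < n := Nat.cast_pos.mpr hn0
  have hdiff : ∀ x ∈ Γ, DifferentiableAt ℝ f x := fun x hx =>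
    (hf_smooth.differentiableOn (by simp)).differentiableAt (hΓopen.mem_nhds hx)
  -- symmetry of the partial derivatives at diagonal points
  have hsym : ∀ t : ℝ, (fun _ : Fin n => t) ∈ Γ → ∀ i j : Fin n,
      fderiv ℝ f (fun _ => t) (Pi.single i 1) = fderiv ℝ f (fun _ => t) (Pi.single j 1) := by
    intro t ht i j
    set σ : Equiv.Perm (Fin n) := Equiv.swap i j with hσ
    set L : (Fin n → ℝ) →L[ℝ] (Fin n → ℝ) :=
      ContinuousLinearMap.pi (fun k => ContinuousLinearMap.proj (σ k)) with hLdef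
    have hL : ∀ x : Fin n → ℝ, L x = x ∘ σ := fun x => rfl
    have hLp : L (fun _ => t) = (fun _ : Fin n => t) := rfl
    have heq : f =ᶠ[nhds (fun _ : Fin n => t)] (f ∘ L) := by
      filter_upwards [hΓopen.mem_nhds ht] with x hx
      simpa [hL] using (hf_symm σ x hx).symm
    have hdf : DifferentiableAt ℝ f (L (fun _ : Fin n => t)) := by rw [hLp]; exact hdiff _ ht
    have h1 : fderiv ℝ (f ∘ L) (fun _ : Fin n => t)
        = (fderiv ℝ f (fun _ : Fin n => t)).comp L := by
      rw [fderiv_comp _ hdf L.differentiableAt, L.fderiv, hLp]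
    have hkey := heq.fderiv_eq.trans h1
    have hLj : L (Pi.single j (1:ℝ)) = Pi.single i (1:ℝ) := by
      rw [hL]
      funext k
      rcases eq_or_ne k i with rfl | hki
      · simp [Function.comp, Pi.single_apply, hσ, Equiv.swap_apply_left]
      · rcases eq_or_ne k j with rfl | hkj
        · simp [Function.comp, Pi.single_apply, hσ, Equiv.swap_apply_right, hki, Ne.symm hki]
        · simp [Function.comp, Pi.single_apply, hσ, Equiv.swap_apply_of_ne_of_ne hki hkj, hki,
            hkj]
    have happ : fderiv ℝ f (fun _ : Fin n => t) (Pi.single j 1)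
        = fderiv ℝ f (fun _ : Fin n => t) (Pi.single i 1) := by
      conv_lhs => rw [hkey]
      rw [ContinuousLinearMap.comp_apply, hLj]
    exact happ.symm
  -- lower bound c^(1/n)
  have hbound : ∀ t : ℝ, (fun _ : Fin n => t) ∈ Γ → ∀ i : Fin n,
      c ^ ((1:ℝ)/n) ≤ fderiv ℝ f (fun _ => t) (Pi.single i 1) := by
    intro t ht i
    have hD := hf_ell _ ht i
    have hprod : c ≤ (fderiv ℝ f (fun _ => t) (Pi.single i 1)) ^ n := by
      calc c ≤ ∏ j : Fin n, fderiv ℝ f (fun _ => t) (Pi.single j 1) := hf_prod _ ht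
        _ = ∏ _j : Fin n, fderiv ℝ f (fun _ => t) (Pi.single i 1) :=
            Finset.prod_congr rfl (fun j _ => hsym t ht j i)
        _ = _ := by rw [Finset.prod_const, Finset.card_univ, Fintype.card_fin]
    calc c ^ ((1:ℝ)/n)
        ≤ ((fderiv ℝ f (fun _ => t) (Pi.single i 1)) ^ n) ^ ((1:ℝ)/n) :=
          Real.rpow_le_rpow hc.le hprod (by positivity)
      _ = fderiv ℝ f (fun _ => t) (Pi.single i 1) := by
          rw [← Real.rpow_natCast (fderiv ℝ f (fun _ => t) (Pi.single i 1)) n,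
            ← Real.rpow_mul hD.le, mul_one_div, div_self (ne_of_gt hnR), Real.rpow_one]
  -- derivative of the diagonal restriction
  have hONE : (∑ k : Fin n, Pi.single k (1:ℝ)) = (fun _ : Fin n => 1) :=
    Finset.univ_sum_single (fun _ : Fin n => (1:ℝ))
  have hsum : ∀ t : ℝ, (fun _ : Fin n => t) ∈ Γ → ∀ i : Fin n,
      fderiv ℝ f (fun _ => t) (fun _ => 1) = n * fderiv ℝ f (fun _ => t) (Pi.single i 1) := by
    intro t ht i
    conv_lhs => rw [← hONE]
    rw [map_sum, Finset.sum_congr rfl (fun j _ => hsym t ht j i), Finset.sum_const,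
      Finset.card_univ, Fintype.card_fin, nsmul_eq_mul]
  have hderivg : ∀ t : ℝ, (fun _ : Fin n => t) ∈ Γ →
      HasDerivAt (fun u : ℝ => f (fun _ : Fin n => u))
        (fderiv ℝ f (fun _ => t) (fun _ => 1)) t := by
    intro t ht
    have hl : HasDerivAt (fun u : ℝ => (fun _ : Fin n => u)) (fun _ : Fin n => (1:ℝ)) t :=
      hasDerivAt_pi.2 (fun _ => hasDerivAt_id' t)
    exact ((hdiff _ ht).hasFDerivAt).comp_hasDerivAt t hl
  -- the diagonal segment
  set I : Set ℝ := {u : ℝ | (fun _ : Fin n => u) ∈ Γ} with hIdef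
  have hIopen : IsOpen I := hΓopen.preimage (continuous_pi fun _ => continuous_id)
  have hIconv : Convex ℝ I := by
    intro u hu v hv a b ha hb hab
    have h2 := hΓconv hu hv ha hb hab
    have harg : (a • (fun _ : Fin n => u) + b • (fun _ : Fin n => v))
        = (fun _ : Fin n => a*u+b*v) := by funext k; simp
    rw [harg] at h2
    exact h2
  have hgconc : ConcaveOn ℝ I (fun u : ℝ => f (fun _ : Fin n => u)) := by
    refine ⟨hIconv, ?_⟩
    intro u hu v hv a b ha hb hab
    have h2 := hf_conc.2 hu hv ha hb hab
    have harg : (a • (fun _ : Fin n => u) + b • (fun _ : Fin n => v))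
        = (fun _ : Fin n => a*u+b*v) := by funext k; simp
    rw [harg] at h2
    exact h2
  -- monotonicity
  have hmono : ∀ s t : ℝ, s < t → (fun _ : Fin n => s) ∈ Γ → (fun _ : Fin n => t) ∈ Γ →
      ∀ i : Fin n, fderiv ℝ f (fun _ => t) (Pi.single i 1)
        ≤ fderiv ℝ f (fun _ => s) (Pi.single i 1) := by
    intro s t hst hs ht i
    have h1 := hgconc.le_slope_of_hasDerivAt hs ht hst (hderivg t ht)
    have h2 := hgconc.slope_le_of_hasDerivAt hs ht hst (hderivg s hs)
    have h3 : fderiv ℝ f (fun _ : Fin n => t) (fun _ => 1)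
        ≤ fderiv ℝ f (fun _ : Fin n => s) (fun _ => 1) := h1.trans h2
    rw [hsum t ht i, hsum s hs i] at h3
    exact le_of_mul_le_mul_left h3 hnR
  -- the ray stays in Γ
  have hray : (fun _ : Fin n => (1:ℝ)) ∈ Γ → ∀ t : ℝ, 1 ≤ t → (fun _ : Fin n => t) ∈ Γ := by
    intro h1 t ht
    by_contra hnot
    have h1I : (1:ℝ) ∈ I := h1
    have hIsub : I ⊆ Set.Iio t := by
      intro u hu
      by_contra hu'
      simp only [Set.mem_Iio, not_lt] at hu'
      rcases eq_or_lt_of_le hu' with rfl | hlt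
      · exact hnot hu
      · exact hnot (hIconv.ordConnected.out h1I hu ⟨ht, hlt.le⟩)
    have hne : I.Nonempty := ⟨1, h1I⟩
    have hbdd : BddAbove I := ⟨t, fun u hu => (hIsub hu).le⟩
    have hbddb : BddBelow I := by
      refine ⟨0, fun u hu => ?_⟩
      have h := hΓsub hu
      simp only [Set.mem_setOf_eq, Finset.sum_const, Finset.card_univ, Fintype.card_fin,
        nsmul_eq_mul] at h
      nlinarith
    set a := sInf I with hadef
    set b := sSup I with hbdef
    have haI : a ∉ I := by
      intro ha
      rcases Metric.isOpen_iff.mp hIopen a ha with ⟨ε, hε, hball⟩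
      have hmem : a - ε/2 ∈ I := by
        refine hball (Metric.mem_ball.mpr ?_)
        rw [Real.dist_eq]
        have he : a - ε/2 - a = -(ε/2) := by ring
        rw [he, abs_neg, abs_of_nonneg (by linarith)]
        linarith
      have := csInf_le hbddb hmem
      linarith
    have hbI : b ∉ I := by
      intro hb
      rcases Metric.isOpen_iff.mp hIopen b hb with ⟨ε, hε, hball⟩
      have hmem : b + ε/2 ∈ I := by
        refine hball (Metric.mem_ball.mpr ?_)
        rw [Real.dist_eq]
        have he : b + ε/2 - b = ε/2 := by ring
        rw [he, abs_of_nonneg (by linarith)]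
        linarith
      have := le_csSup hbdd hmem
      linarith
    have ha1 : a ≤ 1 := csInf_le hbddb h1I
    have h1b : (1:ℝ) ≤ b := le_csSup hbdd h1I
    have hab : a < b := by
      rcases eq_or_lt_of_le ha1 with h | h
      · exact absurd (by rw [h]; exact h1I) haI
      · rcases eq_or_lt_of_le h1b with h' | h'
        · exact absurd (by rw [← h']; exact h1I) hbI
        · linarith
    have hIoo : Set.Ioo a b ⊆ I := by
      intro u hu
      obtain ⟨p, hp, hpu⟩ := exists_lt_of_csInf_lt hne hu.1
      obtain ⟨q, hq, huq⟩ := exists_lt_of_lt_csSup hne hu.2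
      exact hIconv.ordConnected.out hp hq ⟨hpu.le, huq.le⟩
    have hIcc : Set.Icc a b ⊆ closure I := by
      rw [← closure_Ioo (ne_of_lt hab)]
      exact closure_mono hIoo
    have hclosure : ∀ u ∈ Set.Icc a b, (fun _ : Fin n => u) ∈ closure Γ := by
      intro u hu
      have h2 : u ∈ closure I := hIcc hu
      have hcont : Continuous (fun u : ℝ => (fun _ : Fin n => u)) :=
        continuous_pi fun _ => continuous_id
      exact hcont.closure_preimage_subset Γ h2
    have hcg : ContinuousOn (fun u : ℝ => f (fun _ : Fin n => u)) (Set.Icc a b) := by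
      refine hf_cont.comp ((continuous_pi fun _ => continuous_id).continuousOn) ?_
      intro u hu
      exact hclosure u hu
    have hmonog : StrictMonoOn (fun u : ℝ => f (fun _ : Fin n => u)) (Set.Icc a b) := by
      refine strictMonoOn_of_deriv_pos (convex_Icc a b) hcg ?_
      intro u hu
      rw [interior_Icc] at hu
      have huI : (fun _ : Fin n => u) ∈ Γ := hIoo hu
      rw [(hderivg u huI).deriv, hsum u huI ⟨0, hn0⟩]
      exact mul_pos hnR (hf_ell _ huI _)
    have hfa : f (fun _ : Fin n => a) = 0 := by
      refine hf_bdry _ ?_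
      rw [hΓopen.frontier_eq]
      exact ⟨hclosure a ⟨le_refl a, hab.le⟩, haI⟩
    have hfb : f (fun _ : Fin n => b) = 0 := by
      refine hf_bdry _ ?_
      rw [hΓopen.frontier_eq]
      exact ⟨hclosure b ⟨hab.le, le_refl b⟩, hbI⟩
    have hlt : f (fun _ : Fin n => a) < f (fun _ : Fin n => b) :=
      hmonog (Set.left_mem_Icc.mpr hab.le) (Set.right_mem_Icc.mpr hab.le) hab
    rw [hfa, hfb] at hlt
    exact lt_irrefl 0 hlt
  refine ⟨fun s t _hs hst hsm htm i => ⟨hmono s t hst hsm htm i, hbound t htm i⟩, ?_⟩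
  intro h1 i
  constructor
  · intro s hs t ht hst
    rcases eq_or_lt_of_le hst with rfl | h
    · exact le_refl _
    · exact hmono s t h (hray h1 s hs) (hray h1 t ht) i
  · set G : ℝ → ℝ := fun t => fderiv ℝ f (fun _ : Fin n => max 1 t) (Pi.single i 1) with hG
    have hGanti : Antitone G := by
      intro s t hst
      rcases eq_or_lt_of_le (max_le_max (le_refl (1:ℝ)) hst) with heq | h
      · rw [hG]; simp only; rw [← heq]
      · exact hmono _ _ h (hray h1 _ (le_max_left _ _)) (hray h1 _ (le_max_left _ _)) i
    have hGbdd : BddBelow (Set.range G) := by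
      refine ⟨c ^ ((1:ℝ)/n), ?_⟩
      rintro _ ⟨t, rfl⟩
      exact hbound _ (hray h1 _ (le_max_left _ _)) i
    have hGt := tendsto_atTop_ciInf hGanti hGbdd
    refine ⟨⨅ t, G t, ?_, ?_⟩
    · have hle : c ^ ((1:ℝ)/n) ≤ ⨅ t, G t :=
        le_ciInf (fun t => hbound _ (hray h1 _ (le_max_left _ _)) i)
      exact lt_of_lt_of_le (Real.rpow_pos_of_pos hc _) hle
    · have hFG : G =ᶠ[Filter.atTop] (fun t : ℝ => fderiv ℝ f (fun _ => t) (Pi.single i 1)) := by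
        filter_upwards [Filter.eventually_ge_atTop (1:ℝ)] with t ht
        rw [hG]
        simp only [max_eq_right ht]
      exact hGt.congr' hFG
end

section
/- Let n ≥ 2, let Γ ⊆ Γ¹ be a nonempty open symmetric convex subset of ℝⁿ, and let 𝔣 satisfy the structural conditions (1)–(5). Let σ > 0 and λ' ∈ ℝⁿ be such that λ' − σ𝟏 ∈ Γ. Then for every λ ∈ Γ with λ − λ' ∈ Γⁿ one has 𝔣(λ) − 𝔣(λ' − σ𝟏) ≥ n ( c σ^{n−1} ( maxᵢ (λᵢ − λ'ᵢ) + σ ) )^{1/n}. Consequently, for every real number s the set {λ ∈ Γ : 𝔣(λ) = s and λ − λ' ∈ Γⁿ} is bounded. -/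
open Filter Set

lemma concave_grad {E : Type*} [NormedAddCommGroup E] [NormedSpace ℝ E]
    {Γ : Set E} {f : E → ℝ} (hf_conc : ConcaveOn ℝ Γ f)
    {x y : E} (hx : x ∈ Γ) (hy : y ∈ Γ) (hd : DifferentiableAt ℝ f x) :
    f y - f x ≤ fderiv ℝ f x (y - x) := by
  set v := y - x with hv
  set g : ℝ → ℝ := fun t => f (x + t • v) with hg
  have hline : HasDerivAt (fun t : ℝ => x + t • v) v 0 := by
    simpa using ((hasDerivAt_id (0:ℝ)).smul_const v).const_add x
  have hfd : HasFDerivAt f (fderiv ℝ f x) ((fun t : ℝ => x + t • v) 0) := by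
    simpa using hd.hasFDerivAt
  have hgd : HasDerivAt g (fderiv ℝ f x v) 0 := hfd.comp_hasDerivAt 0 hline
  have hg0 : g 0 = f x := by simp [hg]
  have hslope : ∀ t ∈ Set.Ioo (0:ℝ) 1, f y - f x ≤ slope g 0 t := by
    intro t ht
    have hcomb : x + t • v = (1 - t) • x + t • y := by rw [hv]; module
    have hcc := hf_conc.2 hx hy (by linarith [ht.2] : (0:ℝ) ≤ 1 - t) (le_of_lt ht.1)
      (by ring)
    rw [← hcomb] at hcc
    have hgt : f x + t * (f y - f x) ≤ g t := by
      simp only [smul_eq_mul] at hcc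
      have : (1 - t) * f x + t * f y = f x + t * (f y - f x) := by ring
      rw [this] at hcc; exact hcc
    rw [slope_def_field, sub_zero, le_div_iff₀ ht.1]
    linarith [hgt, hg0]
  have htend : Tendsto (slope g 0) (nhdsWithin 0 (Set.Ioi 0)) (nhds (fderiv ℝ f x v)) :=
    (hasDerivAt_iff_tendsto_slope.mp hgd).mono_left
      (nhdsWithin_mono _ (fun t ht => ne_of_gt ht))
  refine ge_of_tendsto htend ?_
  filter_upwards [Ioo_mem_nhdsGT_of_mem (by norm_num : (0:ℝ) ∈ Set.Ico 0 1)] with t ht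
  exact hslope t ht

/-- Under the structural conditions (1)–(5): if `σ > 0` and
`λ' − σ𝟏 ∈ Γ`, then for every `λ ∈ Γ` with `λ − λ' ∈ Γⁿ` one has
`𝔣(λ) − 𝔣(λ' − σ𝟏) ≥ n (c σ^(n−1) (maxᵢ (λᵢ − λ'ᵢ) + σ))^(1/n)`; consequently, for
every real `s` the set `{λ ∈ Γ : 𝔣(λ) = s, λ − λ' ∈ Γⁿ}` is bounded. -/
theorem subsolution_bound
    (n : ℕ) (hn : 2 ≤ n)
    (Γ : Set (Fin n → ℝ)) (f : (Fin n → ℝ) → ℝ) (c : ℝ)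
    (hΓne : Γ.Nonempty) (hΓopen : IsOpen Γ) (hΓconv : Convex ℝ Γ)
    (hΓsymm : ∀ σ : Equiv.Perm (Fin n), ∀ x ∈ Γ, (x ∘ σ) ∈ Γ)
    (hΓsub : Γ ⊆ {x : Fin n → ℝ | 0 < ∑ i, x i})
    (hf_cont : ContinuousOn f (closure Γ))
    (hf_smooth : ContDiffOn ℝ (⊤ : ℕ∞) f Γ)
    (hf_bdry : ∀ x ∈ frontier Γ, f x = 0)
    (hf_symm : ∀ σ : Equiv.Perm (Fin n), ∀ x ∈ Γ, f (x ∘ σ) = f x)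
    (hf_ell : ∀ x ∈ Γ, ∀ i : Fin n, 0 < fderiv ℝ f x (Pi.single i 1))
    (hc : 0 < c)
    (hf_prod : ∀ x ∈ Γ, c ≤ ∏ i : Fin n, fderiv ℝ f x (Pi.single i 1))
    (hf_conc : ConcaveOn ℝ Γ f)
    (σ : ℝ) (hσ : 0 < σ) (lam' : Fin n → ℝ)
    (hlam' : (fun i => lam' i - σ) ∈ Γ) :
    (∀ lam ∈ Γ, (∀ i, 0 < lam i - lam' i) →
      (n : ℝ) * (c * σ ^ (n - 1) * ((⨆ i, (lam i - lam' i)) + σ)) ^ ((1 : ℝ) / n) ≤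
        f lam - f (fun i => lam' i - σ)) ∧
    ∀ s : ℝ,
      Bornology.IsBounded
        {lam : Fin n → ℝ | lam ∈ Γ ∧ f lam = s ∧ ∀ i, 0 < lam i - lam' i} := by
  haveI : Nonempty (Fin n) := Fin.pos_iff_nonempty.mp (by omega)
  have hn0 : (n:ℝ) ≠ 0 := by positivity
  set μ : Fin n → ℝ := fun i => lam' i - σ with hμ
  have main : ∀ lam ∈ Γ, (∀ i, 0 < lam i - lam' i) →
      (n : ℝ) * (c * σ ^ (n - 1) * ((⨆ i, (lam i - lam' i)) + σ)) ^ ((1 : ℝ) / n) ≤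
        f lam - f μ := by
    intro lam hlam hpos
    set L := fderiv ℝ f lam with hL
    have hdiff : DifferentiableAt ℝ f lam :=
      (hf_smooth.differentiableOn (by simp)).differentiableAt (hΓopen.mem_nhds hlam)
    -- gradient inequality
    have hgrad : L (lam - μ) ≤ f lam - f μ := by
      have h1 := concave_grad hf_conc hlam hlam' hdiff
      have h2 : L (μ - lam) = - L (lam - μ) := by
        rw [show μ - lam = -(lam - μ) by abel, map_neg]
      rw [← hL] at h1
      rw [h2] at h1; linarith
    -- expansion
    set a : Fin n → ℝ := fun i => L (Pi.single i 1) * (lam i - μ i) with ha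
    have hdiffpos : ∀ i, 0 < lam i - μ i := by
      intro i; have := hpos i; simp only [hμ]; linarith
    have hapos : ∀ i, 0 < a i := fun i =>
      mul_pos (hf_ell lam hlam i) (hdiffpos i)
    have hexp : L (lam - μ) = ∑ i, a i := by
      have h3 : (lam - μ) = ∑ i, (lam i - μ i) • (Pi.single i 1 : Fin n → ℝ) := by
        ext j
        rw [Finset.sum_apply]
        simp [Pi.single_apply, Finset.sum_ite_eq']
      rw [h3, map_sum]
      refine Finset.sum_congr rfl fun i _ => ?_
      rw [map_smul, smul_eq_mul, ha, mul_comm]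
    -- AM-GM
    have hsum : ∑ _i : Fin n, (1:ℝ)/n = 1 := by
      rw [Finset.sum_const, Finset.card_univ, Fintype.card_fin, nsmul_eq_mul]
      field_simp
    have hamgm : (∏ i, a i) ^ ((1:ℝ)/n) ≤ (1/n) * ∑ i, a i := by
      have h4 := Real.geom_mean_le_arith_mean_weighted Finset.univ (fun _ => (1:ℝ)/n) a
        (fun i _ => by positivity) hsum (fun i _ => (hapos i).le)
      rw [Real.finset_prod_rpow _ _ (fun i _ => (hapos i).le)] at h4
      calc (∏ i, a i) ^ ((1:ℝ)/n) ≤ ∑ i, (1:ℝ)/n * a i := h4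
        _ = (1/n) * ∑ i, a i := by rw [Finset.mul_sum]
    -- product lower bound
    obtain ⟨i₀, hi₀⟩ := Finite.exists_max (fun i => lam i - lam' i)
    have hbdd : BddAbove (Set.range fun i => lam i - lam' i) :=
      Finite.bddAbove_range _
    have hMeq : (⨆ i, lam i - lam' i) = lam i₀ - lam' i₀ :=
      le_antisymm (ciSup_le hi₀) (le_ciSup hbdd i₀)
    have hMpos : 0 < (⨆ i, lam i - lam' i) := by rw [hMeq]; exact hpos i₀
    have hprodd : σ ^ (n-1) * ((⨆ i, lam i - lam' i) + σ) ≤ ∏ i, (lam i - μ i) := by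
      rw [hMeq]
      rw [← Finset.mul_prod_erase _ _ (Finset.mem_univ i₀)]
      have h5 : σ ^ (n-1) ≤ ∏ i ∈ Finset.univ.erase i₀, (lam i - μ i) := by
        calc σ ^ (n-1) = ∏ _i ∈ Finset.univ.erase i₀, σ := by
              rw [Finset.prod_const, Finset.card_erase_of_mem (Finset.mem_univ i₀),
                Finset.card_univ, Fintype.card_fin]
          _ ≤ _ := Finset.prod_le_prod (fun i _ => hσ.le)
              (fun i _ => by have := hpos i; simp only [hμ]; linarith)
      have h6 : lam i₀ - μ i₀ = (lam i₀ - lam' i₀) + σ := by simp [hμ]; ring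
      rw [h6]
      have h7 : 0 < lam i₀ - lam' i₀ + σ := by have := hpos i₀; linarith
      calc σ ^ (n-1) * (lam i₀ - lam' i₀ + σ)
          = (lam i₀ - lam' i₀ + σ) * σ ^ (n-1) := by ring
        _ ≤ (lam i₀ - lam' i₀ + σ) * ∏ i ∈ Finset.univ.erase i₀, (lam i - μ i) :=
            mul_le_mul_of_nonneg_left h5 h7.le
    have hprod : c * σ ^ (n-1) * ((⨆ i, lam i - lam' i) + σ) ≤ ∏ i, a i := by
      have h8 : ∏ i, a i = (∏ i, L (Pi.single i 1)) * ∏ i, (lam i - μ i) := by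
        rw [← Finset.prod_mul_distrib]
      rw [h8, mul_assoc]
      exact mul_le_mul (hf_prod lam hlam) hprodd (by positivity) (by
        exact le_trans hc.le (hf_prod lam hlam))
    -- assemble
    have hXpos : 0 < c * σ ^ (n-1) * ((⨆ i, lam i - lam' i) + σ) := by positivity
    have h9 : (c * σ ^ (n-1) * ((⨆ i, lam i - lam' i) + σ)) ^ ((1:ℝ)/n)
        ≤ (∏ i, a i) ^ ((1:ℝ)/n) :=
      Real.rpow_le_rpow hXpos.le hprod (by positivity)
    have h10 : (n:ℝ) * (∏ i, a i) ^ ((1:ℝ)/n) ≤ ∑ i, a i := by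
      have hnpos : (0:ℝ) < n := by positivity
      calc (n:ℝ) * (∏ i, a i) ^ ((1:ℝ)/n) ≤ (n:ℝ) * ((1/n) * ∑ i, a i) :=
            mul_le_mul_of_nonneg_left hamgm hnpos.le
        _ = ∑ i, a i := by field_simp
    calc (n : ℝ) * (c * σ ^ (n - 1) * ((⨆ i, (lam i - lam' i)) + σ)) ^ ((1 : ℝ) / n)
        ≤ (n:ℝ) * (∏ i, a i) ^ ((1:ℝ)/n) := mul_le_mul_of_nonneg_left h9 (by positivity)
      _ ≤ ∑ i, a i := h10
      _ = L (lam - μ) := hexp.symm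
      _ ≤ f lam - f μ := hgrad
  refine ⟨main, ?_⟩
  intro s
  set K := s - f μ with hK
  set R := (K/n)^n / (c * σ ^ (n-1)) with hR
  have hsub : {lam : Fin n → ℝ | lam ∈ Γ ∧ f lam = s ∧ ∀ i, 0 < lam i - lam' i}
      ⊆ Metric.closedBall lam' R := by
    rintro lam ⟨hlam, hfs, hpos⟩
    have h1 := main lam hlam hpos
    rw [hfs] at h1
    set M := ⨆ i, lam i - lam' i with hM
    obtain ⟨i₀, hi₀⟩ := Finite.exists_max (fun i => lam i - lam' i)
    have hbdd : BddAbove (Set.range fun i => lam i - lam' i) :=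
      Finite.bddAbove_range _
    have hMpos : 0 < M := lt_of_lt_of_le (hpos i₀) (le_ciSup hbdd i₀)
    have hXpos : 0 < c * σ ^ (n-1) * (M + σ) := by positivity
    have h2 : (c * σ ^ (n-1) * (M + σ)) ^ ((1:ℝ)/n) ≤ K/n := by
      rw [le_div_iff₀ (by positivity : (0:ℝ) < n), mul_comm]
      exact h1
    have h3 : c * σ ^ (n-1) * (M + σ) ≤ (K/n)^n := by
      have h4 := pow_le_pow_left₀ (Real.rpow_nonneg hXpos.le _) h2 n
      rwa [← Real.rpow_natCast ((c * σ ^ (n-1) * (M + σ)) ^ ((1:ℝ)/n)) n,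
        ← Real.rpow_mul hXpos.le, one_div, inv_mul_cancel₀ hn0, Real.rpow_one] at h4
    have h5 : M + σ ≤ R := by
      rw [hR, le_div_iff₀ (by positivity : (0:ℝ) < c * σ ^ (n-1))]
      linarith [h3]
    have hR0 : 0 ≤ R := le_trans (by linarith) h5
    rw [Metric.mem_closedBall]
    rw [dist_pi_le_iff hR0]
    intro i
    rw [Real.dist_eq, abs_of_pos (hpos i)]
    have : lam i - lam' i ≤ M := le_ciSup hbdd i
    linarith
  exact Metric.isBounded_closedBall.subset hsub
end

section
/- (Alexandrov–Bakelman–Pucci maximum principle.) For every n ≥ 1 there exists a constant c₀ > 0 depending only on n with the following property. Let ε > 0 and let v be a real-valued function that is smooth on an open neighborhood of the closed unit ball B̄(0,1) ⊂ ℝⁿ and satisfies v(0) + ε ≤ inf_{∂B(0,1)} v. Define P := { x ∈ B(0,1) : |Dv(x)| < ε/2 and v(y) ≥ v(x) + Dv(x) · (y − x) for all y ∈ B(0,1) }. Then c₀ εⁿ ≤ ∫_P det D²v(x) dx, where D²v(x) denotes the Hessian matrix of v at x (which is positive semidefinite on P, so the integrand is nonnegative). -/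
open Set Metric MeasureTheory Topology Filter InnerProductSpace
open scoped ENNReal

lemma aux_1d {g g' : ℝ → ℝ} {c δ : ℝ} (hδ : 0 < δ)
    (hg : ∀ t ∈ Ioo (-δ) δ, HasDerivAt g (g' t) t)
    (hg' : HasDerivAt g' c 0) (h0 : g' 0 = 0)
    (hmin : ∀ t ∈ Ioo (-δ) δ, g 0 ≤ g t) : 0 ≤ c := by
  by_contra hc
  push_neg at hc
  have hslope := hasDerivAt_iff_tendsto_slope.1 hg'
  have hev : ∀ᶠ t in 𝓝[>] (0:ℝ), g' t < 0 := by
    have h1 : ∀ᶠ t in 𝓝[≠] (0:ℝ), slope g' 0 t < 0 := hslope (Iio_mem_nhds hc)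
    have h2 : ∀ᶠ t in 𝓝[>] (0:ℝ), slope g' 0 t < 0 :=
      h1.filter_mono (nhdsWithin_mono 0 fun t ht => ne_of_gt ht)
    filter_upwards [h2, self_mem_nhdsWithin] with t ht ht0
    rw [mem_Ioi] at ht0
    have := ht
    rw [slope_def_field, h0, sub_zero, sub_zero, div_lt_iff₀ ht0, zero_mul] at this
    exact this
  obtain ⟨u, hu, hsub⟩ := mem_nhdsGT_iff_exists_Ioo_subset.1 hev
  rw [mem_Ioi] at hu
  set b := min (u/2) (δ/2) with hb
  have hb0 : 0 < b := lt_min (by linarith) (by linarith)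
  have hbu : b < u := lt_of_le_of_lt (min_le_left _ _) (by linarith)
  have hbδ : b < δ := lt_of_le_of_lt (min_le_right _ _) (by linarith)
  have hIcc : Icc (0:ℝ) b ⊆ Ioo (-δ) δ := fun t ht =>
    ⟨by linarith [ht.1], lt_of_le_of_lt ht.2 hbδ⟩
  have hanti : StrictAntiOn g (Icc 0 b) := by
    apply strictAntiOn_of_deriv_neg (convex_Icc 0 b)
    · exact fun t ht => ((hg t (hIcc ht)).continuousAt).continuousWithinAt
    · intro t ht
      rw [interior_Icc] at ht
      rw [(hg t (hIcc (Ioo_subset_Icc_self ht))).deriv]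
      exact hsub ⟨ht.1, lt_trans ht.2 hbu⟩
  have : g b < g 0 := hanti (left_mem_Icc.2 hb0.le) (right_mem_Icc.2 hb0.le) hb0
  exact absurd (hmin b ⟨by linarith, hbδ⟩) (not_le.2 this)

lemma aux_psd {E : Type*} [NormedAddCommGroup E] [NormedSpace ℝ E] {v : E → ℝ} {U s : Set E}
    (hU : IsOpen U) (hv : ContDiffOn ℝ (⊤ : ℕ∞) v U) (hs : IsOpen s) {x : E} (hxU : x ∈ U) (hxs : x ∈ s)
    (hsupp : ∀ y ∈ s, v x + fderiv ℝ v x (y - x) ≤ v y) (w : E) :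
    0 ≤ fderiv ℝ (fderiv ℝ v) x w w := by
  have hvx : ContDiffAt ℝ (⊤ : ℕ∞) v x := hv.contDiffAt (hU.mem_nhds hxU)
  have hdvx : ContDiffAt ℝ (⊤ : ℕ∞) (fderiv ℝ v) x := hvx.fderiv_right (by simp)
  have hF2 : HasFDerivAt (fderiv ℝ v) (fderiv ℝ (fderiv ℝ v) x) x :=
    (hdvx.differentiableAt (by simp)).hasFDerivAt
  have hdiff : ∀ z ∈ U, HasFDerivAt v (fderiv ℝ v z) z := fun z hz =>
    ((hv.contDiffAt (hU.mem_nhds hz)).differentiableAt (by simp)).hasFDerivAt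
  have hline : Continuous (fun t : ℝ => x + t • w) := by continuity
  have hmem : (fun t : ℝ => x + t • w) ⁻¹' (s ∩ U) ∈ 𝓝 (0:ℝ) := by
    apply hline.continuousAt.preimage_mem_nhds
    refine (hs.inter hU).mem_nhds ⟨by simpa using hxs, by simpa using hxU⟩
  obtain ⟨δ, hδ0, hδ⟩ := Metric.mem_nhds_iff.1 hmem
  have hin : ∀ t ∈ Ioo (-δ) δ, x + t • w ∈ s ∩ U := by
    intro t ht
    apply hδ
    simp only [Metric.mem_ball, Real.dist_eq, sub_zero]
    exact abs_lt.2 ⟨ht.1, ht.2⟩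
  set g : ℝ → ℝ := fun t => v (x + t • w) - fderiv ℝ v x (x + t • w) with hgdef
  set g' : ℝ → ℝ := fun t => fderiv ℝ v (x + t • w) w - fderiv ℝ v x w with hg'def
  have hlinederiv : ∀ t : ℝ, HasDerivAt (fun t : ℝ => x + t • w) w t := by
    intro t
    simpa using ((hasDerivAt_id t).smul_const w).const_add x
  have hg : ∀ t ∈ Ioo (-δ) δ, HasDerivAt g (g' t) t := by
    intro t ht
    have h1 : HasDerivAt (fun t : ℝ => v (x + t • w)) (fderiv ℝ v (x + t • w) w) t :=
      (hdiff _ (hin t ht).2).comp_hasDerivAt t (hlinederiv t)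
    have h2 : HasDerivAt (fun t : ℝ => fderiv ℝ v x (x + t • w)) (fderiv ℝ v x w) t :=
      (fderiv ℝ v x).hasFDerivAt.comp_hasDerivAt t (hlinederiv t)
    exact h1.sub h2
  have hg' : HasDerivAt g' (fderiv ℝ (fderiv ℝ v) x w w) 0 := by
    have h1 : HasDerivAt (fun t : ℝ => fderiv ℝ v (x + t • w)) (fderiv ℝ (fderiv ℝ v) x w) 0 := by
      have hx0 : x = x + (0:ℝ) • w := by simp
      rw [hx0] at hF2
      simpa [Function.comp_def] using hF2.comp_hasDerivAt 0 (hlinederiv 0)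
    have h2 : HasDerivAt (fun t : ℝ => fderiv ℝ v (x + t • w) w)
        (fderiv ℝ (fderiv ℝ v) x w w) 0 :=
      ((ContinuousLinearMap.apply ℝ ℝ w).hasFDerivAt.comp_hasDerivAt 0 h1)
    exact h2.sub_const _
  have h0 : g' 0 = 0 := by simp [hg'def]
  have hmin : ∀ t ∈ Ioo (-δ) δ, g 0 ≤ g t := by
    intro t ht
    have hy := hsupp _ (hin t ht).1
    have : fderiv ℝ v x (x + t • w - x) = fderiv ℝ v x (x + t • w) - fderiv ℝ v x x :=
      map_sub _ _ _
    simp only [hgdef]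
    simp only [zero_smul, add_zero]
    linarith [hy, this]
  exact aux_1d hδ0 hg hg' h0 hmin

lemma aux_cover {E : Type*} [NormedAddCommGroup E] [InnerProductSpace ℝ E] [ProperSpace E]
    {v : E → ℝ} {U : Set E} (hU : IsOpen U) (hBU : closedBall 0 1 ⊆ U)
    (hv : ContDiffOn ℝ (⊤ : ℕ∞) v U) {ε : ℝ} (hε : 0 < ε)
    (hbd : ∀ y ∈ sphere (0:E) 1, v 0 + ε ≤ v y) {p : E} (hp : ‖p‖ < ε/2) :
    ∃ x ∈ ball (0:E) 1, fderiv ℝ v x = innerSL ℝ p ∧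
      ∀ y ∈ ball (0:E) 1, v x + fderiv ℝ v x (y - x) ≤ v y := by
  set w : E → ℝ := fun y => v y - innerSL ℝ p y with hw
  have hwc : ContinuousOn w (closedBall 0 1) :=
    (hv.continuousOn.mono hBU).sub ((innerSL ℝ p).continuous.continuousOn)
  obtain ⟨x₀, hx₀, hminOn⟩ := (isCompact_closedBall (0:E) 1).exists_isMinOn
    ⟨0, mem_closedBall_self zero_le_one⟩ hwc
  have hmin : ∀ y ∈ closedBall (0:E) 1, w x₀ ≤ w y := fun y hy => hminOn hy
  have hx₀ball : x₀ ∈ ball (0:E) 1 := by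
    by_contra hxb
    have hnorm : ‖x₀‖ = 1 := le_antisymm (mem_closedBall_zero_iff.1 hx₀)
      (not_lt.1 fun h => hxb (mem_ball_zero_iff.2 h))
    have h1 : v 0 + ε ≤ v x₀ := hbd x₀ (mem_sphere_zero_iff_norm.2 hnorm)
    have h2 : |inner ℝ p x₀| ≤ ‖p‖ := by
      calc |inner ℝ p x₀| ≤ ‖p‖ * ‖x₀‖ := abs_real_inner_le_norm p x₀
        _ = ‖p‖ := by rw [hnorm, mul_one]
    have h3 : w x₀ ≤ w 0 := hmin 0 (mem_closedBall_self zero_le_one)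
    have h4 : innerSL ℝ p x₀ = inner ℝ p x₀ := rfl
    have h5 : innerSL ℝ p (0:E) = (0:ℝ) := by simp
    simp only [hw, h4, h5, sub_zero] at h3
    have := abs_le.1 h2
    linarith
  have hdiffv : DifferentiableAt ℝ v x₀ :=
    (hv.contDiffAt (hU.mem_nhds (hBU hx₀))).differentiableAt (by simp)
  have hloc : IsLocalMin w x₀ :=
    hminOn.isLocalMin (closedBall_mem_nhds_of_mem hx₀ball)
  have hfw : fderiv ℝ w x₀ = 0 := hloc.fderiv_eq_zero
  have hsub : fderiv ℝ w x₀ = fderiv ℝ v x₀ - innerSL ℝ p := by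
    rw [hw]
    rw [fderiv_fun_sub hdiffv (innerSL ℝ p).differentiableAt, (innerSL ℝ p).fderiv]
  have hfv : fderiv ℝ v x₀ = innerSL ℝ p := by
    have := hsub.symm.trans hfw
    rwa [sub_eq_zero] at this
  refine ⟨x₀, hx₀ball, hfv, fun y hy => ?_⟩
  have h6 := hmin y (ball_subset_closedBall hy)
  have h7 : fderiv ℝ v x₀ (y - x₀) = inner ℝ p y - inner ℝ p x₀ := by
    rw [hfv, map_sub]; rfl
  simp only [hw] at h6
  have h8 : innerSL ℝ p y = inner ℝ p y := rfl
  have h9 : innerSL ℝ p x₀ = inner ℝ p x₀ := rfl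
  rw [h8, h9] at h6
  linarith [h6, h7]

lemma aux_det_nonneg {n : ℕ} {M : Matrix (Fin n) (Fin n) ℝ} (hM : M.PosSemidef) : 0 ≤ M.det := by
  rw [hM.1.det_eq_prod_eigenvalues]
  exact Finset.prod_nonneg fun i _ => by simpa using hM.eigenvalues_nonneg i

noncomputable def LLdual (n : ℕ) :
    (EuclideanSpace ℝ (Fin n) →L[ℝ] ℝ) →L[ℝ] EuclideanSpace ℝ (Fin n) :=
  ((toDual ℝ (EuclideanSpace ℝ (Fin n))).symm.toContinuousLinearEquiv :
    (EuclideanSpace ℝ (Fin n) →L[ℝ] ℝ) ≃L[ℝ] EuclideanSpace ℝ (Fin n)).toContinuousLinearMap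

lemma LLdual_coord {n : ℕ} (L : EuclideanSpace ℝ (Fin n) →L[ℝ] ℝ) (i : Fin n) :
    (LLdual n L) i = L (EuclideanSpace.single i 1) := by
  have h1 : (LLdual n L) i
      = inner ℝ ((toDual ℝ (EuclideanSpace ℝ (Fin n))).symm L) (EuclideanSpace.single i (1:ℝ)) := by
    rw [EuclideanSpace.inner_single_right]
    simp [LLdual]
  rw [h1, toDual_symm_apply]

lemma det_eq {n : ℕ} (F2 : EuclideanSpace ℝ (Fin n) →L[ℝ] EuclideanSpace ℝ (Fin n) →L[ℝ] ℝ) :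
    ((LLdual n).comp F2).det
      = Matrix.det (Matrix.of fun i j : Fin n =>
          F2 (EuclideanSpace.single j 1) (EuclideanSpace.single i 1)) := by
  classical
  set b := (EuclideanSpace.basisFun (Fin n) ℝ).toBasis with hb
  have : ContinuousLinearMap.det ((LLdual n).comp F2)
      = LinearMap.det (((LLdual n).comp F2) :
          EuclideanSpace ℝ (Fin n) →ₗ[ℝ] EuclideanSpace ℝ (Fin n)) := rfl
  rw [this, ← LinearMap.det_toMatrix b]
  congr 1
  ext i j
  rw [LinearMap.toMatrix_apply]
  have hbj : b j = EuclideanSpace.single j 1 := by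
    rw [hb, (EuclideanSpace.basisFun (Fin n) ℝ).coe_toBasis]
    exact EuclideanSpace.basisFun_apply (Fin n) ℝ j
  rw [hbj]
  have hrepr : ∀ (w : EuclideanSpace ℝ (Fin n)), b.repr w i = w i := fun w => by
    rw [hb, (EuclideanSpace.basisFun (Fin n) ℝ).coe_toBasis_repr_apply]
    exact EuclideanSpace.basisFun_repr (Fin n) ℝ w i
  rw [hrepr]
  show (LLdual n (F2 (EuclideanSpace.single j 1))) i = _
  rw [LLdual_coord]
  simp

lemma aux_posSemidef {n : ℕ} (F2 : EuclideanSpace ℝ (Fin n) →L[ℝ] EuclideanSpace ℝ (Fin n) →L[ℝ] ℝ)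
    (hsymm : ∀ a b, F2 a b = F2 b a) (hquad : ∀ w, 0 ≤ F2 w w) :
    (Matrix.of fun i j : Fin n =>
      F2 (EuclideanSpace.single i 1) (EuclideanSpace.single j 1)).PosSemidef := by
  classical
  rw [Matrix.posSemidef_iff_dotProduct_mulVec]
  constructor
  · ext i j
    simp only [Matrix.conjTranspose_apply, Matrix.of_apply, star_trivial]
    exact hsymm _ _
  · intro y
    set w : EuclideanSpace ℝ (Fin n) := ∑ i, y i • EuclideanSpace.single i (1:ℝ) with hw
    have expand : ∀ (L : EuclideanSpace ℝ (Fin n) →L[ℝ] ℝ),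
        L w = ∑ i, y i * L (EuclideanSpace.single i 1) := by
      intro L
      rw [hw, map_sum]
      simp [_root_.map_smul]
    have h1 : F2 w w = ∑ i, y i * ∑ j, y j * F2 (EuclideanSpace.single j 1)
        (EuclideanSpace.single i 1) := by
      rw [expand (F2 w)]
      apply Finset.sum_congr rfl
      intro i _
      congr 1
      have : F2 w (EuclideanSpace.single i 1) = F2.flip (EuclideanSpace.single i 1) w := rfl
      rw [this, expand]
      rfl
    have key : dotProduct (star y) ((Matrix.of fun i j : Fin n =>
        F2 (EuclideanSpace.single i 1) (EuclideanSpace.single j 1)).mulVec y) = F2 w w := by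
      rw [h1]
      simp only [dotProduct, Matrix.mulVec, star_trivial, Matrix.of_apply]
      apply Finset.sum_congr rfl
      intro i _
      simp only [Finset.mul_sum]
      apply Finset.sum_congr rfl
      intro j _
      rw [hsymm (EuclideanSpace.single j 1) (EuclideanSpace.single i 1)]
      ring
    rw [key]
    exact hquad w

abbrev EE (n : ℕ) : Type := EuclideanSpace ℝ (Fin n)

/-- **Alexandrov–Bakelman–Pucci maximum principle.**
For every `n ≥ 1` there is a dimensional constant `c₀ > 0` such that: if `ε > 0` and
`v` is smooth on an open neighborhood of the closed unit ball with
`v(0) + ε ≤ inf_{∂B(0,1)} v`, and `P` is the set of points of `B(0,1)` where `|Dv| < ε/2`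
and the tangent plane of `v` lies below `v` on all of `B(0,1)`, then
`c₀ εⁿ ≤ ∫_P det D²v`. -/
theorem alexandrov_bakelman_pucci
    (n : ℕ) (hn : 1 ≤ n) :
    ∃ c₀ : ℝ, 0 < c₀ ∧
      ∀ (ε : ℝ), 0 < ε →
      ∀ (v : EuclideanSpace ℝ (Fin n) → ℝ) (U : Set (EuclideanSpace ℝ (Fin n))),
        IsOpen U → Metric.closedBall 0 1 ⊆ U → ContDiffOn ℝ (⊤ : ℕ∞) v U →
        v 0 + ε ≤ ⨅ y ∈ Metric.sphere (0 : EuclideanSpace ℝ (Fin n)) 1, v y →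
        c₀ * ε ^ n ≤
          ∫ x in {x ∈ Metric.ball (0 : EuclideanSpace ℝ (Fin n)) 1 |
              ‖fderiv ℝ v x‖ < ε / 2 ∧
              ∀ y ∈ Metric.ball (0 : EuclideanSpace ℝ (Fin n)) 1,
                v x + fderiv ℝ v x (y - x) ≤ v y},
            Matrix.det (Matrix.of fun i j : Fin n =>
              fderiv ℝ (fun z => fderiv ℝ v z (EuclideanSpace.single j 1)) x
                (EuclideanSpace.single i 1)) := by
  classical
  haveI : Nonempty (Fin n) := Fin.pos_iff_nonempty.1 hn
  set μB : ℝ≥0∞ := volume (ball (0:EE n) 1) with hμB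
  have hμB0 : 0 < μB := measure_ball_pos volume 0 one_pos
  have hμBT : μB ≠ ⊤ := measure_ball_lt_top.ne
  have hc₀ : (0:ℝ) < μB.toReal / 2 ^ n := by
    apply div_pos (ENNReal.toReal_pos hμB0.ne' hμBT)
    positivity
  refine ⟨μB.toReal / 2 ^ n, hc₀, ?_⟩
  intro ε hε v U hU hBU hv hinf
  have hballU : ball (0:EE n) 1 ⊆ U := ball_subset_closedBall.trans hBU
  set P : Set (EE n) := {x ∈ ball (0:EE n) 1 |
      ‖fderiv ℝ v x‖ < ε / 2 ∧
      ∀ y ∈ ball (0:EE n) 1, v x + fderiv ℝ v x (y - x) ≤ v y} with hP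
  have hPball : P ⊆ ball (0:EE n) 1 := fun x hx => hx.1
  -- the integrand
  set g : EE n → ℝ := fun x => Matrix.det (Matrix.of fun i j : Fin n =>
      fderiv ℝ (fun z => fderiv ℝ v z (EuclideanSpace.single j 1)) x
        (EuclideanSpace.single i 1)) with hg
  -- step 1 : boundary bound
  have hsphere : ∀ y ∈ sphere (0:EE n) 1, v 0 + ε ≤ v y := by
    intro y hy
    have hsne : (sphere (0:EE n) 1).Nonempty := NormedSpace.sphere_nonempty.2 zero_le_one
    have hsub : sphere (0:EE n) 1 ⊆ U := fun z hz => hBU (sphere_subset_closedBall hz)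
    obtain ⟨m, hm, hmin⟩ := (isCompact_sphere (0:EE n) 1).exists_isMinOn hsne
      (hv.continuousOn.mono hsub)
    have hbdd : BddBelow (Set.range fun z => ⨅ _ : z ∈ sphere (0:EE n) 1, v z) := by
      refine ⟨min (v m) 0, ?_⟩
      rintro r ⟨z, rfl⟩
      show v m ⊓ 0 ≤ ⨅ _ : z ∈ sphere (0:EE n) 1, v z
      by_cases hz : z ∈ sphere (0:EE n) 1
      · rw [ciInf_pos hz]
        exact le_trans (min_le_left _ _) (hmin hz)
      · haveI : IsEmpty (z ∈ sphere (0:EE n) 1) := ⟨hz⟩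
        rw [iInf_of_isEmpty, Real.sInf_empty]
        exact min_le_right _ _
    calc v 0 + ε ≤ ⨅ y ∈ sphere (0:EE n) 1, v y := hinf
      _ ≤ ⨅ _ : y ∈ sphere (0:EE n) 1, v y := ciInf_le hbdd y
      _ = v y := ciInf_pos hy
  -- step 2 : measurability of P
  have hdf : ContinuousOn (fderiv ℝ v) (ball (0:EE n) 1) :=
    ((hv.continuousOn_fderiv_of_isOpen hU (by simp)).mono hballU)
  have hvc : ContinuousOn v (ball (0:EE n) 1) := hv.continuousOn.mono hballU
  have hPmeas : MeasurableSet P := by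
    set Q : Set (EE n) := ball (0:EE n) 1 ∩ (fderiv ℝ v) ⁻¹' {L | ‖L‖ < ε/2} with hQ
    have hQo : IsOpen Q :=
      hdf.isOpen_inter_preimage isOpen_ball (isOpen_lt (continuous_norm) continuous_const)
    set R : Set (EE n) := ⋃ y ∈ ball (0:EE n) 1,
        (ball (0:EE n) 1 ∩ {x | v y < v x + fderiv ℝ v x (y - x)}) with hR
    have hRo : IsOpen R := by
      refine isOpen_biUnion fun y hy => ?_
      have hcont : ContinuousOn (fun x => v x + fderiv ℝ v x (y - x)) (ball (0:EE n) 1) := by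
        apply hvc.add
        have h1 : ContinuousOn (fun x => (fderiv ℝ v x, y - x)) (ball (0:EE n) 1) :=
          hdf.prodMk ((continuous_const.sub continuous_id).continuousOn)
        exact isBoundedBilinearMap_apply.continuous.comp_continuousOn h1
      have := hcont.isOpen_inter_preimage isOpen_ball (isOpen_lt continuous_const continuous_id :
        IsOpen {t : ℝ | v y < t})
      simpa using this
    have hset : P = Q \ R := by
      ext x
      simp only [hP, hQ, hR, mem_sep_iff, mem_diff, mem_inter_iff, mem_preimage, mem_setOf_eq,
        mem_iUnion, not_exists, exists_prop, not_and, not_lt]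
      constructor
      · rintro ⟨hb, hgr, ht⟩
        exact ⟨⟨hb, hgr⟩, fun y hy h => ht y hy⟩
      · rintro ⟨⟨hb, hgr⟩, ht⟩
        exact ⟨hb, hgr, fun y hy => ht y hy hb⟩
    rw [hset]
    exact hQo.measurableSet.diff hRo.measurableSet
  -- derivative facts
  have hF2 : ∀ x ∈ U, HasFDerivAt (fderiv ℝ v) (fderiv ℝ (fderiv ℝ v) x) x := by
    intro x hx
    have hdvx : ContDiffAt ℝ (⊤ : ℕ∞) (fderiv ℝ v) x :=
      (hv.contDiffAt (hU.mem_nhds hx)).fderiv_right (by simp)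
    exact (hdvx.differentiableAt (by simp)).hasFDerivAt
  -- step 3 : matrix entries on U
  have hA : ∀ x ∈ U, ∀ i j : Fin n,
      fderiv ℝ (fun z => fderiv ℝ v z (EuclideanSpace.single j 1)) x (EuclideanSpace.single i 1)
        = fderiv ℝ (fderiv ℝ v) x (EuclideanSpace.single i (1:ℝ)) (EuclideanSpace.single j 1) := by
    intro x hx i j
    have h : HasFDerivAt (fun z => fderiv ℝ v z (EuclideanSpace.single j 1))
        ((ContinuousLinearMap.apply ℝ ℝ (EuclideanSpace.single j (1:ℝ))).comp
          (fderiv ℝ (fderiv ℝ v) x)) x :=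
      (ContinuousLinearMap.apply ℝ ℝ (EuclideanSpace.single j (1:ℝ))).hasFDerivAt.comp x
        (hF2 x hx)
    rw [h.fderiv]
    rfl
  -- step 4 : nonnegativity of g on P, and det identity
  have hgP : ∀ x ∈ P, 0 ≤ g x := by
    intro x hx
    have hxU : x ∈ U := hballU hx.1
    have hsymm : ∀ a b, fderiv ℝ (fderiv ℝ v) x a b = fderiv ℝ (fderiv ℝ v) x b a :=
      (hv.contDiffAt (hU.mem_nhds hxU)).isSymmSndFDerivAt (by rw [minSmoothness_of_isRCLikeNormedField]; exact WithTop.coe_le_coe.2 le_top)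
    have hquad : ∀ w, 0 ≤ fderiv ℝ (fderiv ℝ v) x w w := fun w =>
      aux_psd hU hv isOpen_ball hxU hx.1 hx.2.2 w
    have hmat : (Matrix.of fun i j : Fin n =>
        fderiv ℝ (fun z => fderiv ℝ v z (EuclideanSpace.single j 1)) x
          (EuclideanSpace.single i 1))
        = (Matrix.of fun i j : Fin n => fderiv ℝ (fderiv ℝ v) x
            (EuclideanSpace.single i 1) (EuclideanSpace.single j 1)) := by
      ext i j
      exact hA x hxU i j
    rw [hg]
    simp only [hmat]
    exact aux_det_nonneg (aux_posSemidef _ hsymm hquad)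
  have hdet : ∀ x ∈ U, ((LLdual n).comp (fderiv ℝ (fderiv ℝ v) x)).det = g x := by
    intro x hx
    have hmat : (Matrix.of fun i j : Fin n =>
        fderiv ℝ (fun z => fderiv ℝ v z (EuclideanSpace.single j 1)) x
          (EuclideanSpace.single i 1))
        = (Matrix.of fun i j : Fin n => fderiv ℝ (fderiv ℝ v) x
            (EuclideanSpace.single j 1) (EuclideanSpace.single i 1)).transpose := by
      ext i j
      simp only [Matrix.transpose_apply, Matrix.of_apply]
      exact hA x hx i j
    simp only [hg]
    rw [det_eq, hmat, Matrix.det_transpose]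
  -- step 5 : gradient map and covering
  set G : EE n → EE n := fun x => LLdual n (fderiv ℝ v x) with hGdef
  have himage : ball (0:EE n) (ε/2) ⊆ G '' P := by
    intro p hp
    rw [mem_ball_zero_iff] at hp
    obtain ⟨x, hxb, hfv, htan⟩ := aux_cover hU hBU hv hε hsphere hp
    have hxP : x ∈ P := by
      refine ⟨hxb, ?_, htan⟩
      rw [hfv, innerSL_apply_norm]
      exact hp
    refine ⟨x, hxP, ?_⟩
    show LLdual n (fderiv ℝ v x) = p
    rw [hfv]
    have : innerSL ℝ p = toDual ℝ (EE n) p := by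
      ext y
      simp [toDual_apply_apply]
    rw [this]
    show ((toDual ℝ (EE n)).symm.toContinuousLinearEquiv :
      (EE n →L[ℝ] ℝ) ≃L[ℝ] EE n) (toDual ℝ (EE n) p) = p
    simp
  have hG' : ∀ x ∈ P, HasFDerivWithinAt G ((LLdual n).comp (fderiv ℝ (fderiv ℝ v) x)) P x := by
    intro x hx
    exact (((LLdual n).hasFDerivAt).comp x (hF2 x (hballU hx.1))).hasFDerivWithinAt
  -- step 6 : continuity and integrability of g
  have hF2cont : ContinuousOn (fun x => fderiv ℝ (fderiv ℝ v) x) U :=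
    (hv.fderiv_of_isOpen (m := 1) hU (WithTop.coe_le_coe.2 le_top)).continuousOn_fderiv_of_isOpen hU le_rfl
  have hgcont : ContinuousOn g U := by
    have hent : ∀ i j : Fin n, ContinuousOn (fun x => fderiv ℝ (fderiv ℝ v) x
        (EuclideanSpace.single i (1:ℝ)) (EuclideanSpace.single j 1)) U := by
      intro i j
      exact ((ContinuousLinearMap.apply ℝ ℝ (EuclideanSpace.single j (1:ℝ))).continuous.comp
        ((ContinuousLinearMap.apply ℝ (EE n →L[ℝ] ℝ)
          (EuclideanSpace.single i (1:ℝ))).continuous)).comp_continuousOn hF2cont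
    have hM : ContinuousOn (fun x => (Matrix.of fun i j : Fin n => fderiv ℝ (fderiv ℝ v) x
        (EuclideanSpace.single i (1:ℝ)) (EuclideanSpace.single j 1))) U := by
      apply continuousOn_pi.2
      intro i
      apply continuousOn_pi.2
      intro j
      exact hent i j
    have hdetc : ContinuousOn (fun x => Matrix.det (Matrix.of fun i j : Fin n =>
        fderiv ℝ (fderiv ℝ v) x (EuclideanSpace.single i (1:ℝ)) (EuclideanSpace.single j 1))) U :=
      (continuous_id.matrix_det).comp_continuousOn hM
    apply hdetc.congr
    intro x hx
    simp only [hg]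
    congr 1
    ext i j
    exact hA x hx i j
  have hInt : IntegrableOn g P := by
    have h1 : IntegrableOn g (closedBall (0:EE n) 1) :=
      (hgcont.mono hBU).integrableOn_compact (isCompact_closedBall _ _)
    exact h1.mono_set (hPball.trans ball_subset_closedBall)
  -- step 7 : the measure chain
  have hchain : volume (ball (0:EE n) (ε/2)) ≤ ∫⁻ x in P, ENNReal.ofReal (g x) := by
    calc volume (ball (0:EE n) (ε/2)) ≤ volume (G '' P) := measure_mono himage
      _ ≤ ∫⁻ x in P, ENNReal.ofReal |((LLdual n).comp (fderiv ℝ (fderiv ℝ v) x)).det| :=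
        addHaar_image_le_lintegral_abs_det_fderiv volume hPmeas hG'
      _ = ∫⁻ x in P, ENNReal.ofReal (g x) := by
        apply setLIntegral_congr_fun hPmeas
        intro x hx
        dsimp only
        rw [hdet x (hballU hx.1), abs_of_nonneg (hgP x hx)]
  have hfin : ∫⁻ x in P, ENNReal.ofReal (g x) < ⊤ := hInt.setLIntegral_lt_top
  have hint_eq : ∫ x in P, g x = (∫⁻ x in P, ENNReal.ofReal (g x)).toReal := by
    rw [integral_eq_lintegral_of_nonneg_ae (ae_restrict_of_forall_mem hPmeas hgP)
      hInt.aestronglyMeasurable]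
  have hball : volume (ball (0:EE n) (ε/2)) = ENNReal.ofReal ((ε/2)^n) * μB := by
    rw [Measure.addHaar_ball_of_pos volume 0 (by positivity : (0:ℝ) < ε/2)]
    rw [finrank_euclideanSpace_fin]
  have hfinal : μB.toReal / 2 ^ n * ε ^ n ≤ ∫ x in P, g x := by
    have h1 : (volume (ball (0:EE n) (ε/2))).toReal ≤ (∫⁻ x in P, ENNReal.ofReal (g x)).toReal :=
      ENNReal.toReal_mono hfin.ne hchain
    rw [hball, ENNReal.toReal_mul, ENNReal.toReal_ofReal (by positivity : (0:ℝ) ≤ (ε/2)^n)] at h1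
    rw [hint_eq]
    calc μB.toReal / 2 ^ n * ε ^ n = (ε/2)^n * μB.toReal := by
          rw [div_pow]; ring
      _ ≤ _ := h1
  exact hfinal
end

section
/- (Generalized Young's inequality.) For every p > 0 there exists a constant C = C(p) > 0, depending only on p, such that for every integer n ≥ 1, every real number t, and every real x ≥ 0: ( (ln(x + 1))/2 )^p · e^{n t} ≤ e^{n t} (1 + n|t|)^p + C (x + 1). -/
lemma rpow_le_const_mul_exp (p : ℝ) (hp : 0 < p) (y : ℝ) (hy : 0 ≤ y) :
    y ^ p ≤ ((⌈p⌉₊.factorial : ℝ) + 1) * Real.exp y := by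
  set k := ⌈p⌉₊
  have hk : p ≤ (k : ℝ) := Nat.le_ceil p
  have hpow : y ^ (k : ℕ) ≤ (k.factorial : ℝ) * Real.exp y := by
    have := Real.pow_div_factorial_le_exp y hy k
    have hfac : (0:ℝ) < k.factorial := by positivity
    calc y ^ k = (y ^ k / k.factorial) * k.factorial := by field_simp
    _ ≤ Real.exp y * k.factorial := by
        exact mul_le_mul_of_nonneg_right this hfac.le
    _ = (k.factorial : ℝ) * Real.exp y := mul_comm _ _
  rcases le_or_gt y 1 with h1 | h1
  · calc y ^ p ≤ 1 ^ p := Real.rpow_le_rpow hy h1 hp.le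
    _ = 1 := Real.one_rpow p
    _ ≤ ((k.factorial : ℝ) + 1) * Real.exp y := by
        have := Real.exp_pos y
        have h1e : (1:ℝ) ≤ Real.exp y := Real.one_le_exp hy
        nlinarith [Nat.one_le_iff_ne_zero.mpr (Nat.factorial_ne_zero k),
          (by exact_mod_cast Nat.one_le_iff_ne_zero.mpr (Nat.factorial_ne_zero k) :
            (1:ℝ) ≤ k.factorial)]
  · calc y ^ p ≤ y ^ (k : ℝ) := Real.rpow_le_rpow_of_exponent_le h1.le hk
    _ = y ^ (k : ℕ) := Real.rpow_natCast y k
    _ ≤ (k.factorial : ℝ) * Real.exp y := hpow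
    _ ≤ ((k.factorial : ℝ) + 1) * Real.exp y := by
        nlinarith [Real.exp_pos y]

/-- **Generalized Young's inequality.**
For every `p > 0` there exists `C = C(p) > 0` such that for every `n ≥ 1`, every
`t : ℝ` and every `x ≥ 0`:
`((ln(x+1))/2)^p · e^{nt} ≤ e^{nt} (1 + n|t|)^p + C (x + 1)`. -/
theorem generalized_young_inequality
    (p : ℝ) (hp : 0 < p) :
    ∃ C : ℝ, 0 < C ∧
      ∀ (n : ℕ), 1 ≤ n → ∀ (t x : ℝ), 0 ≤ x →
        (Real.log (x + 1) / 2) ^ p * Real.exp (n * t) ≤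
          Real.exp (n * t) * (1 + n * |t|) ^ p + C * (x + 1) := by
  refine ⟨(⌈p⌉₊.factorial : ℝ) + 1, by positivity, ?_⟩
  intro n hn t x hx
  set L := Real.log (x + 1) / 2 with hLdef
  have hL : 0 ≤ L := by
    have : (0:ℝ) ≤ Real.log (x + 1) := Real.log_nonneg (by linarith)
    simpa [hLdef] using by linarith
  have hx1 : Real.exp (2 * L) = x + 1 := by
    rw [hLdef]; rw [show 2 * (Real.log (x+1) / 2) = Real.log (x+1) by ring]
    exact Real.exp_log (by linarith)
  have hnt : (n : ℝ) * |t| = |(n : ℝ) * t| := by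
    rw [abs_mul, abs_of_nonneg (by positivity : (0:ℝ) ≤ (n:ℝ))]
  rcases le_or_gt L (1 + n * |t|) with hcase | hcase
  · have h1 : L ^ p ≤ (1 + n * |t|) ^ p := Real.rpow_le_rpow hL hcase hp.le
    have h2 : L ^ p * Real.exp (n * t) ≤ (1 + n * |t|) ^ p * Real.exp (n * t) :=
      mul_le_mul_of_nonneg_right h1 (Real.exp_pos _).le
    nlinarith [Real.exp_pos ((n:ℝ) * t), mul_nonneg (by positivity : (0:ℝ) ≤ (⌈p⌉₊.factorial : ℝ) + 1) (by linarith : (0:ℝ) ≤ x + 1)]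
  · have hexp : Real.exp ((n:ℝ) * t) ≤ Real.exp L := by
      apply Real.exp_le_exp.2
      calc (n:ℝ) * t ≤ |(n:ℝ) * t| := le_abs_self _
      _ = (n:ℝ) * |t| := hnt.symm
      _ ≤ L := by linarith
    have h1 : L ^ p ≤ ((⌈p⌉₊.factorial : ℝ) + 1) * Real.exp L :=
      rpow_le_const_mul_exp p hp L hL
    have h2 : L ^ p * Real.exp ((n:ℝ) * t) ≤
        ((⌈p⌉₊.factorial : ℝ) + 1) * Real.exp L * Real.exp L := by
      calc L ^ p * Real.exp ((n:ℝ) * t) ≤ L ^ p * Real.exp L :=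
            mul_le_mul_of_nonneg_left hexp (Real.rpow_nonneg hL p)
      _ ≤ ((⌈p⌉₊.factorial : ℝ) + 1) * Real.exp L * Real.exp L :=
            mul_le_mul_of_nonneg_right h1 (Real.exp_pos _).le
    have h3 : Real.exp L * Real.exp L = x + 1 := by
      rw [← Real.exp_add, show L + L = 2 * L by ring, hx1]
    have h4 : (0:ℝ) ≤ Real.exp ((n:ℝ) * t) * (1 + n * |t|) ^ p := by positivity
    calc L ^ p * Real.exp ((n:ℝ) * t)
        ≤ ((⌈p⌉₊.factorial : ℝ) + 1) * Real.exp L * Real.exp L := h2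
      _ = ((⌈p⌉₊.factorial : ℝ) + 1) * (x + 1) := by rw [mul_assoc, h3]
      _ ≤ Real.exp ((n:ℝ) * t) * (1 + n * |t|) ^ p +
          ((⌈p⌉₊.factorial : ℝ) + 1) * (x + 1) := by linarith
end

section
/- Let n ≥ 2, let Γ ⊆ Γ¹ be a nonempty open symmetric convex subset of ℝⁿ, and let 𝔣 satisfy the structural conditions (1)–(5). Assume in addition that tλ ∈ Γ for every λ ∈ Γ and every t ≥ 1. Then Σᵢ₌₁ⁿ ∂𝔣/∂λᵢ(λ) · λᵢ ≥ 0 for every λ ∈ Γ. -/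
open Set Filter Topology

/-- Gradient inequality for concave functions: `f y ≤ f x + f'(x)(y - x)`. -/
lemma concave_grad_ineq {E : Type*} [NormedAddCommGroup E] [NormedSpace ℝ E]
    {Γ : Set E} {f : E → ℝ}
    (hΓopen : IsOpen Γ) (hconc : ConcaveOn ℝ Γ f)
    (hdiff : DifferentiableOn ℝ f Γ)
    {x y : E} (hx : x ∈ Γ) (hy : y ∈ Γ) :
    f y ≤ f x + fderiv ℝ f x (y - x) := by
  have hfd : HasFDerivAt f (fderiv ℝ f x) x :=
    (hdiff.differentiableAt (hΓopen.mem_nhds hx)).hasFDerivAt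
  set g : ℝ → E := fun t => x + t • (y - x) with hg
  have h0 : g 0 = x := by simp [hg]
  have hgd : HasDerivAt (fun t : ℝ => f (g t)) (fderiv ℝ f x (y - x)) 0 := by
    have h1 : HasDerivAt g (y - x) 0 := by
      rw [hg]; simpa using ((hasDerivAt_id (0:ℝ)).smul_const (y - x)).const_add x
    have hfd' : HasFDerivAt f (fderiv ℝ f x) (g 0) := by rw [h0]; exact hfd
    exact hfd'.comp_hasDerivAt 0 h1
  have hslope : Tendsto (fun t : ℝ => (f (g t) - f (g 0)) / t) (𝓝[>] 0)
      (𝓝 (fderiv ℝ f x (y - x))) := by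
    have := (hasDerivAt_iff_tendsto_slope.mp hgd).mono_left
      (nhdsWithin_mono _ (fun t ht => ne_of_gt ht))
    refine this.congr (fun t => ?_)
    simp [slope_def_field]
  have hev : ∀ᶠ t in 𝓝[>] (0:ℝ), f y - f x ≤ (f (g t) - f (g 0)) / t := by
    filter_upwards [Ioo_mem_nhdsGT_of_mem (Set.left_mem_Ico.mpr one_pos)] with t ht
    have hconc' := hconc.2 hx hy (show (0:ℝ) ≤ 1 - t by linarith [ht.2])
      (le_of_lt ht.1) (by ring)
    have hxy : (1 - t) • x + t • y = g t := by
      simp only [hg, smul_sub, sub_smul, one_smul]; abel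
    rw [hxy] at hconc'
    rw [h0, le_div_iff₀ ht.1]
    simp only [smul_eq_mul] at hconc'
    nlinarith [hconc']
  have := ge_of_tendsto hslope hev
  linarith [this]

/-- Under the structural conditions (1)–(5), if in addition
`tλ ∈ Γ` for every `λ ∈ Γ` and `t ≥ 1`, then `Σᵢ ∂𝔣/∂λᵢ(λ) λᵢ ≥ 0` for every
`λ ∈ Γ`. -/
theorem euler_sum_nonneg
    (n : ℕ) (hn : 2 ≤ n)
    (Γ : Set (Fin n → ℝ)) (f : (Fin n → ℝ) → ℝ) (c : ℝ)
    (hΓne : Γ.Nonempty) (hΓopen : IsOpen Γ) (hΓconv : Convex ℝ Γ)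
    (hΓsymm : ∀ σ : Equiv.Perm (Fin n), ∀ x ∈ Γ, (x ∘ σ) ∈ Γ)
    (hΓsub : Γ ⊆ {x : Fin n → ℝ | 0 < ∑ i, x i})
    (hf_cont : ContinuousOn f (closure Γ))
    (hf_smooth : ContDiffOn ℝ (⊤ : ℕ∞) f Γ)
    (hf_bdry : ∀ x ∈ frontier Γ, f x = 0)
    (hf_symm : ∀ σ : Equiv.Perm (Fin n), ∀ x ∈ Γ, f (x ∘ σ) = f x)
    (hf_ell : ∀ x ∈ Γ, ∀ i : Fin n, 0 < fderiv ℝ f x (Pi.single i 1))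
    (hc : 0 < c)
    (hf_prod : ∀ x ∈ Γ, c ≤ ∏ i : Fin n, fderiv ℝ f x (Pi.single i 1))
    (hf_conc : ConcaveOn ℝ Γ f)
    (hcone : ∀ lam ∈ Γ, ∀ t : ℝ, 1 ≤ t → t • lam ∈ Γ) :
    ∀ lam ∈ Γ, 0 ≤ ∑ i, fderiv ℝ f lam (Pi.single i 1) * lam i := by
  have hdiff : DifferentiableOn ℝ f Γ := hf_smooth.differentiableOn (by simp)
  -- the derivative applied to a vector equals the sum of partials
  have hDapply : ∀ x ∈ Γ, ∀ v : Fin n → ℝ,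
      fderiv ℝ f x v = ∑ i, fderiv ℝ f x (Pi.single i 1) * v i := by
    intro x hx v
    have hv : v = ∑ i, v i • (Pi.single i 1 : Fin n → ℝ) := by
      conv_lhs => rw [pi_eq_sum_univ v]
      refine Finset.sum_congr rfl fun i _ => ?_
      congr 1
      funext j
      simp [Pi.single_apply, eq_comm]
    conv_lhs => rw [hv]
    rw [map_sum]
    refine Finset.sum_congr rfl fun i _ => ?_
    rw [(fderiv ℝ f x).map_smul, smul_eq_mul]
    ring
  -- Step 1 : f ≥ 0 on Γ
  have hfnonneg : ∀ x ∈ Γ, 0 ≤ f x := by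
    intro x hx
    set vone : Fin n → ℝ := fun _ => 1 with hvone
    have hcont : Continuous (fun s : ℝ => x - s • vone) :=
      continuous_const.sub (continuous_id.smul continuous_const)
    set S : Set ℝ := {s : ℝ | 0 ≤ s ∧ x - s • vone ∈ Γ} with hS
    have h0S : (0:ℝ) ∈ S := ⟨le_refl 0, by simpa using hx⟩
    have hbdd : BddAbove S := by
      refine ⟨(∑ i, x i) / n, fun s hs => ?_⟩
      have hsum : 0 < ∑ i, (x - s • vone) i := hΓsub hs.2
      have heq : ∑ i, (x - s • vone) i = (∑ i, x i) - n * s := by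
        simp [hvone, Finset.sum_sub_distrib, Finset.sum_const, Finset.card_univ,
          nsmul_eq_mul]
      rw [heq] at hsum
      have hn0 : (0:ℝ) < n := by positivity
      rw [le_div_iff₀ hn0]; nlinarith
    set s₀ := sSup S with hs₀
    have hs₀0 : 0 ≤ s₀ := le_csSup hbdd h0S
    have hmem : ∀ s, 0 ≤ s → s < s₀ → x - s • vone ∈ Γ := by
      intro s hs hss
      obtain ⟨s', hs'S, hss'⟩ := exists_lt_of_lt_csSup ⟨0, h0S⟩ hss
      have hs'pos : 0 < s' := lt_of_le_of_lt hs hss'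
      have hconvpt := hΓconv hx hs'S.2 (a := 1 - s / s') (b := s / s')
        (by rw [sub_nonneg]; exact div_le_one_of_le₀ (le_of_lt hss') (le_of_lt hs'pos))
        (by positivity) (by ring)
      have heq : (1 - s / s') • x + (s / s') • (x - s' • vone) = x - s • vone := by
        rw [smul_sub, sub_smul, one_smul, smul_smul, div_mul_cancel₀ _ (ne_of_gt hs'pos)]
        abel
      rwa [heq] at hconvpt
    have hs₀pos : 0 < s₀ := by
      have hnh : (fun s : ℝ => x - s • vone) ⁻¹' Γ ∈ 𝓝 (0:ℝ) := by
        refine (hcont.continuousAt).preimage_mem_nhds ?_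
        refine hΓopen.mem_nhds ?_
        simpa using hx
      obtain ⟨δ, hδpos, hδ⟩ := Metric.mem_nhds_iff.mp hnh
      have hmemδ : (δ/2 : ℝ) ∈ S := by
        refine ⟨by positivity, hδ ?_⟩
        rw [Metric.mem_ball, Real.dist_eq, sub_zero, abs_of_nonneg (by positivity)]
        linarith
      exact lt_of_lt_of_le (by positivity) (le_csSup hbdd hmemδ)
    set z := x - s₀ • vone with hz
    have htend : Tendsto (fun s : ℝ => x - s • vone) (𝓝[<] s₀) (𝓝 z) :=
      (hcont.tendsto s₀).mono_left nhdsWithin_le_nhds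
    have hev : ∀ᶠ s in 𝓝[<] s₀, x - s • vone ∈ Γ := by
      filter_upwards [Ioo_mem_nhdsLT_of_mem (Set.right_mem_Ioc.mpr hs₀pos)] with s hs
      exact hmem s (le_of_lt hs.1) hs.2
    have hzcl : z ∈ closure Γ := mem_closure_of_tendsto htend hev
    have hznot : z ∉ Γ := by
      intro hzΓ
      have hnh : (fun s : ℝ => x - s • vone) ⁻¹' Γ ∈ 𝓝 s₀ :=
        (hcont.continuousAt).preimage_mem_nhds (hΓopen.mem_nhds hzΓ)
      obtain ⟨δ, hδpos, hδ⟩ := Metric.mem_nhds_iff.mp hnh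
      have hmemδ : (s₀ + δ/2) ∈ S := by
        refine ⟨by linarith, hδ ?_⟩
        rw [Metric.mem_ball, Real.dist_eq, add_sub_cancel_left,
          abs_of_nonneg (by positivity)]
        linarith
      have := le_csSup hbdd hmemδ
      linarith
    have hzfr : z ∈ frontier Γ := by
      rw [hΓopen.frontier_eq]; exact ⟨hzcl, hznot⟩
    have hfz : f z = 0 := hf_bdry z hzfr
    have hkey : ∀ s, 0 ≤ s → s < s₀ → f (x - s • vone) ≤ f x := by
      intro s hs hss
      have h1 := concave_grad_ineq hΓopen hf_conc hdiff hx (hmem s hs hss)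
      have hcoord : ∀ i, (x - s • vone - x) i = -s := by
        intro i; simp [hvone]
      have h2 : fderiv ℝ f x (x - s • vone - x)
          = -s * ∑ i, fderiv ℝ f x (Pi.single i 1) := by
        rw [hDapply x hx, Finset.mul_sum]
        refine Finset.sum_congr rfl fun i _ => ?_
        rw [hcoord i]; ring
      rw [h2] at h1
      have hsumpos : 0 < ∑ i, fderiv ℝ f x (Pi.single i 1) :=
        Finset.sum_pos (fun i _ => hf_ell x hx i)
          ⟨⟨0, by omega⟩, Finset.mem_univ _⟩
      nlinarith
    have hftend : Tendsto (fun s : ℝ => f (x - s • vone)) (𝓝[<] s₀) (𝓝 (f z)) := by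
      have htend' : Tendsto (fun s : ℝ => x - s • vone) (𝓝[<] s₀) (𝓝[closure Γ] z) :=
        tendsto_nhdsWithin_of_tendsto_nhds_of_eventually_within _ htend
          (hev.mono fun s hs => subset_closure hs)
      exact (hf_cont z hzcl).tendsto.comp htend'
    have hfle : f z ≤ f x := by
      refine le_of_tendsto hftend ?_
      filter_upwards [Ioo_mem_nhdsLT_of_mem (Set.right_mem_Ioc.mpr hs₀pos)] with s hs
      exact hkey s (le_of_lt hs.1) hs.2
    rw [hfz] at hfle
    exact hfle
  -- Step 2 : conclude by concavity along the ray t • lam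
  intro lam hlam
  by_contra hneg
  push_neg at hneg
  obtain ⟨D, hD⟩ : ∃ D : ℝ, D = ∑ i, fderiv ℝ f lam (Pi.single i 1) * lam i := ⟨_, rfl⟩
  rw [← hD] at hneg
  have hDneg : D < 0 := hneg
  obtain ⟨t, ht⟩ : ∃ t : ℝ, t = 1 + (f lam + 1) / (-D) := ⟨_, rfl⟩
  have hdivnn : 0 ≤ (f lam + 1) / (-D) := by
    apply div_nonneg
    · linarith [hfnonneg lam hlam]
    · linarith
  have ht1 : 1 ≤ t := by rw [ht]; linarith
  have htlam : t • lam ∈ Γ := hcone lam hlam t ht1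
  have h1 := concave_grad_ineq hΓopen hf_conc hdiff hlam htlam
  have h2 : fderiv ℝ f lam (t • lam - lam) = (t - 1) * D := by
    have heq : t • lam - lam = (t - 1) • lam := by rw [sub_smul, one_smul]
    rw [heq, (fderiv ℝ f lam).map_smul, hDapply lam hlam, ← hD, smul_eq_mul]
  rw [h2] at h1
  have ht1' : (t - 1) * D = -(f lam + 1) := by
    rw [ht]
    have hD0 : -D ≠ 0 := by linarith
    have hD0' : D ≠ 0 := hDneg.ne
    field_simp
    ring
  rw [ht1'] at h1
  have := hfnonneg (t • lam) htlam
  linarith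
end

section
/- Let n ≥ 2, let Γ ⊆ Γ¹ be a nonempty open symmetric convex subset of ℝⁿ, and let 𝔣 ∈ C¹(Γ) be concave with Σᵢ₌₁ⁿ ∂𝔣/∂λᵢ(μ) · μᵢ ≥ 0 for every μ ∈ Γ. Suppose L > 0 is such that L𝟏 ∈ Γ, and let ε > 0 and λ ∈ Γ satisfy 𝔣(L𝟏) > 𝔣(λ) + ε. Then Σᵢ₌₁ⁿ ∂𝔣/∂λᵢ(λ) > ε / L. -/
/-! Concavity puts the tangent plane at `λ` above the graph, so
`f(L𝟏) - f(λ) ≤ Df(λ)(L𝟏 - λ) = L Σᵢ ∂ᵢf(λ) - Df(λ)λ`, and the Euler-type hypothesis says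
exactly that `Df(λ)λ ≥ 0`. -/

open Finset

theorem LinearMapClass.map_eq_sum_smul_map_single {ι R M F : Type*} [Fintype ι] [DecidableEq ι]
    [Semiring R] [AddCommMonoid M] [Module R M] [FunLike F (ι → R) M]
    [LinearMapClass F R (ι → R) M] (φ : F) (x : ι → R) :
    φ x = ∑ i, x i • φ (Pi.single i 1) := by
  conv_lhs => rw [← univ_sum_single x, map_sum]
  refine sum_congr rfl fun i _ => ?_
  rw [← map_smul, ← Pi.single_smul', smul_eq_mul, mul_one]

theorem ConcaveOn.sub_le_of_hasFDerivAt {E : Type*} [NormedAddCommGroup E] [NormedSpace ℝ E]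
    {s : Set E} {f : E → ℝ} {f' : E →L[ℝ] ℝ} {x y : E} (hf : ConcaveOn ℝ s f)
    (hx : x ∈ s) (hy : y ∈ s) (hf' : HasFDerivAt f f' x) :
    f y - f x ≤ f' (y - x) := by
  set ℓ : ℝ →ᵃ[ℝ] E := AffineMap.lineMap x y
  have hℓ : HasDerivAt ℓ (y - x) 0 := AffineMap.hasDerivAt_lineMap
  have hslope := (hf.comp_affineMap ℓ).slope_le_of_hasDerivAt
    (x := 0) (y := 1) (by simpa [ℓ] using hx) (by simpa [ℓ] using hy) zero_lt_one
    ((by simpa [ℓ] using hf' : HasFDerivAt f f' (ℓ 0)).comp_hasDerivAt 0 hℓ)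
  simpa [slope_def_field, ℓ] using hslope

theorem sum_of_derivatives_positive_lower_bound_general
    (n : ℕ)
    (Γ : Set (Fin n → ℝ)) (f : (Fin n → ℝ) → ℝ)
    (hΓopen : IsOpen Γ)
    (hf_diff : ContDiffOn ℝ 1 f Γ)
    (hf_conc : ConcaveOn ℝ Γ f)
    (hf_euler : ∀ mu ∈ Γ, 0 ≤ ∑ i, fderiv ℝ f mu (Pi.single i 1) * mu i)
    (L : ℝ) (hL : 0 < L) (hLmem : (fun _ : Fin n => L) ∈ Γ)
    (ε : ℝ)
    (lam : Fin n → ℝ) (hlam : lam ∈ Γ)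
    (hgap : f lam + ε < f (fun _ => L)) :
    ε / L < ∑ i, fderiv ℝ f lam (Pi.single i 1) := by
  set φ := fderiv ℝ f lam
  have hf' : HasFDerivAt f φ lam :=
    ((hf_diff.differentiableOn one_ne_zero).differentiableAt (hΓopen.mem_nhds hlam)).hasFDerivAt
  have htangent := hf_conc.sub_le_of_hasFDerivAt hlam hLmem hf'
  have hφ_lam : 0 ≤ φ lam := by
    simpa [LinearMapClass.map_eq_sum_smul_map_single φ lam, mul_comm] using hf_euler lam hlam
  have hφ_const : φ (fun _ => L) = L * ∑ i, φ (Pi.single i 1) := by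
    rw [LinearMapClass.map_eq_sum_smul_map_single φ, mul_sum]
    simp only [smul_eq_mul]
  rw [div_lt_iff₀ hL, mul_comm]
  linarith [map_sub φ (fun _ => L) lam]

/-- Let `Γ ⊆ Γ¹` be a nonempty open symmetric convex subset of `ℝⁿ`
(`n ≥ 2`) and let `𝔣 ∈ C¹(Γ)` be concave with `Σᵢ ∂𝔣/∂λᵢ(μ) μᵢ ≥ 0` on `Γ`.
If `L > 0`, `L𝟏 ∈ Γ`, `ε > 0` and `λ ∈ Γ` satisfy `𝔣(L𝟏) > 𝔣(λ) + ε`, then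
`Σᵢ ∂𝔣/∂λᵢ(λ) > ε / L`. -/
theorem sum_of_derivatives_positive_lower_bound
    (n : ℕ) (hn : 2 ≤ n)
    (Γ : Set (Fin n → ℝ)) (f : (Fin n → ℝ) → ℝ)
    (hΓne : Γ.Nonempty) (hΓopen : IsOpen Γ) (hΓconv : Convex ℝ Γ)
    (hΓsymm : ∀ σ : Equiv.Perm (Fin n), ∀ x ∈ Γ, (x ∘ σ) ∈ Γ)
    (hΓsub : Γ ⊆ {x : Fin n → ℝ | 0 < ∑ i, x i})
    (hf_diff : ContDiffOn ℝ 1 f Γ)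
    (hf_conc : ConcaveOn ℝ Γ f)
    (hf_euler : ∀ mu ∈ Γ, 0 ≤ ∑ i, fderiv ℝ f mu (Pi.single i 1) * mu i)
    (L : ℝ) (hL : 0 < L) (hLmem : (fun _ : Fin n => L) ∈ Γ)
    (ε : ℝ) (hε : 0 < ε)
    (lam : Fin n → ℝ) (hlam : lam ∈ Γ)
    (hgap : f lam + ε < f (fun _ => L)) :
    ε / L < ∑ i, fderiv ℝ f lam (Pi.single i 1) :=
  sum_of_derivatives_positive_lower_bound_general n Γ f hΓopen hf_diff hf_conc hf_euler L hL hLmem ε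
    lam hlam hgap
end
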